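/- arXiv:1907.03900 — 8 statements merged into one kernel-verified Lean document; each statement's English description precedes it below -/
import Mathlib

section
/- Let A, A* be a spin Leonard pair on V with a balanced Boltzmann pair W, W*. Let {E_i}_{i=0}^d be a standard ordering of the primitive idempotents of A, set E*_i = (W W* W)^{-1} E_i (W W* W) for 0 ≤ i ≤ d, and let Φ = (A; {E_i}_{i=0}^d; A*; {E*_i}_{i=0}^d) be the resulting Leonard system on V. Let f, τ_0, …, τ_d be the nonzero scalars with τ_0 = 1 and W = f Σ_{i=0}^d τ_i E_i, and set γ = f^{-1} tr(W* E_0). Then γ = ν^{-1} Σ_{i=0}^d k_i τ_i. -/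
noncomputable section

open Finset

variable {F V : Type*} [Field F] [AddCommGroup V] [Module F V]

/-- A matrix is irreducible tridiagonal: each nonzero entry lies on the diagonal,
subdiagonal or superdiagonal, and every subdiagonal and superdiagonal entry is nonzero. -/
def IsIrredTridiag {n : ℕ} {F : Type*} [Field F] (M : Matrix (Fin n) (Fin n) F) : Prop :=
  (∀ i j : Fin n, ((i : ℕ) + 1 < (j : ℕ) ∨ (j : ℕ) + 1 < (i : ℕ)) → M i j = 0) ∧
  (∀ i j : Fin n, ((i : ℕ) + 1 = (j : ℕ) ∨ (j : ℕ) + 1 = (i : ℕ)) → M i j ≠ 0)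

/-- A Leonard pair on `V` (of dimension `d+1`): there is a basis in which `A` is
irreducible tridiagonal and `A*` diagonal, and a basis in which `A*` is irreducible
tridiagonal and `A` diagonal. -/
def IsLeonardPair (d : ℕ) (A Astar : Module.End F V) : Prop :=
  (∃ b : Module.Basis (Fin (d + 1)) F V,
    IsIrredTridiag (LinearMap.toMatrix b b A) ∧ (LinearMap.toMatrix b b Astar).IsDiag) ∧
  (∃ b : Module.Basis (Fin (d + 1)) F V,
    IsIrredTridiag (LinearMap.toMatrix b b Astar) ∧ (LinearMap.toMatrix b b A).IsDiag)

/-- A Boltzmann pair for the Leonard pair `A, A*` : invertible `W ∈ ⟨A⟩`,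
`W* ∈ ⟨A*⟩` with `W A* W⁻¹ = (W*)⁻¹ A W*`. -/
def IsBoltzmannPair (A Astar W Wstar : Module.End F V) : Prop :=
  W ∈ Algebra.adjoin F {A} ∧ Wstar ∈ Algebra.adjoin F {Astar} ∧
  IsUnit W ∧ IsUnit Wstar ∧
  W * Astar * Ring.inverse W = Ring.inverse Wstar * A * Wstar

/-- `E` is an ordering of the primitive idempotents of the multiplicity-free map `B`. -/
def IsIdemOrdering (d : ℕ) (B : Module.End F V) (E : Fin (d + 1) → Module.End F V) : Prop :=
  (∀ i, E i ≠ 0) ∧ (∀ i j, E i * E j = if i = j then E i else 0) ∧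
  (∑ i, E i = 1) ∧ ∃ θ : Fin (d + 1) → F, Function.Injective θ ∧ B = ∑ i, θ i • E i

/-- `E` is a standard ordering of the primitive idempotents of `B` (relative to `C`):
choosing nonzero `vᵢ ∈ Eᵢ V`, the matrix of `C` in the basis `vᵢ` is irreducible
tridiagonal (and the matrix of `B` is diagonal). -/
def IsStandardOrdering (d : ℕ) (B C : Module.End F V)
    (E : Fin (d + 1) → Module.End F V) : Prop :=
  IsIdemOrdering d B E ∧
  ∃ b : Module.Basis (Fin (d + 1)) F V, (∀ i, E i (b i) = b i) ∧
    IsIrredTridiag (LinearMap.toMatrix b b C) ∧ (LinearMap.toMatrix b b B).IsDiag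

/-- A Leonard system on `V`. -/
def IsLeonardSystem (d : ℕ) (A Astar : Module.End F V)
    (E Estar : Fin (d + 1) → Module.End F V) : Prop :=
  IsLeonardPair d A Astar ∧ IsStandardOrdering d A Astar E ∧ IsStandardOrdering d Astar A Estar

/-! Put `X = W W* W`. The balanced braid relation gives `W X = X W*`, so conjugation by `X`,
which carries each `Eᵢ` to `E*ᵢ`, carries `W = f Σ τᵢ Eᵢ` to `W* = f Σ τᵢ E*ᵢ`. Multiplying by
`E₀` and taking traces gives `tr(W* E₀) = f Σ τᵢ tr(E*ᵢ E₀) = f ν⁻¹ Σ kᵢ τᵢ`. -/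

theorem mul_braid_eq_braid_mul {M : Type*} [Semigroup M] {a b : M}
    (h : a * b * a = b * a * b) : a * (a * b * a) = a * b * a * b := by
  conv_lhs => rw [h]
  simp only [mul_assoc]

theorem Ring.inverse_mul_mul_eq_of_mul_eq {R : Type*} [MonoidWithZero R] {x a b : R}
    (hx : IsUnit x) (h : a * x = x * b) : Ring.inverse x * a * x = b := by
  rw [mul_assoc, h, ← mul_assoc, Ring.inverse_mul_cancel x hx, one_mul]

theorem conj_smul_sum_smul {F R ι : Type*} [CommSemiring F] [Semiring R] [Algebra F R]
    (s : Finset ι) (y z : R) (f : F) (c : ι → F) (e : ι → R) :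
    y * (f • ∑ i ∈ s, c i • e i) * z = f • ∑ i ∈ s, c i • (y * e i * z) := by
  simp only [mul_smul_comm, smul_mul_assoc, Finset.mul_sum, Finset.sum_mul]

theorem gamma_eq_sum_ki_tau_general {F V : Type*} [Field F] [AddCommGroup V] [Module F V]
    (d : ℕ) (A Astar W Wstar : Module.End F V)
    (hB : IsBoltzmannPair A Astar W Wstar)
    (hbal : W * Wstar * W = Wstar * W * Wstar)
    (E Estar : Fin (d + 1) → Module.End F V)
    (hEstar : ∀ i, Estar i = Ring.inverse (W * Wstar * W) * E i * (W * Wstar * W))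
    (ν : F) (hν0 : ν ≠ 0)
    (k : Fin (d + 1) → F)
    (hk : ∀ i, k i = ν * LinearMap.trace F V (Estar i * E 0))
    (f : F) (τ : Fin (d + 1) → F)
    (hf : f ≠ 0)
    (hW : W = f • ∑ i, τ i • E i)
    (γ : F) (hγ : γ = f⁻¹ * LinearMap.trace F V (Wstar * E 0)) :
    γ = ν⁻¹ * ∑ i, k i * τ i := by
  obtain ⟨-, -, hWu, hWstaru, -⟩ := hB
  set X := W * Wstar * W
  have hWstar : Wstar = f • ∑ i, τ i • Estar i := calc
    Wstar = Ring.inverse X * W * X :=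
      (Ring.inverse_mul_mul_eq_of_mul_eq ((hWu.mul hWstaru).mul hWu)
        (mul_braid_eq_braid_mul hbal)).symm
    _ = Ring.inverse X * (f • ∑ i, τ i • E i) * X := by rw [← hW]
    _ = f • ∑ i, τ i • Estar i := by simp only [conj_smul_sum_smul, hEstar]
  have htrace : LinearMap.trace F V (Wstar * E 0) = f * ν⁻¹ * ∑ i, k i * τ i := by
    simp only [hWstar, smul_mul_assoc, Finset.sum_mul, map_smul, map_sum, hk, smul_eq_mul,
      Finset.mul_sum]
    field_simp
    exact Finset.sum_congr rfl fun i _ => by ring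
  rw [hγ, htrace]
  field_simp

/-- with `γ = f⁻¹ tr(W* E₀)` and `kᵢ = ν tr(E*ᵢ E₀)`,
one has `γ = ν⁻¹ Σᵢ kᵢ τᵢ`. -/
theorem gamma_eq_sum_ki_tau {F V : Type*} [Field F] [AddCommGroup V] [Module F V]
    (d : ℕ) (A Astar W Wstar : Module.End F V)
    (hLP : IsLeonardPair d A Astar)
    (hB : IsBoltzmannPair A Astar W Wstar)
    (hbal : W * Wstar * W = Wstar * W * Wstar)
    (E Estar : Fin (d + 1) → Module.End F V)
    (hEstar : ∀ i, Estar i = Ring.inverse (W * Wstar * W) * E i * (W * Wstar * W))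
    (hLS : IsLeonardSystem d A Astar E Estar)
    (ν : F) (hν0 : ν ≠ 0)
    (hν1 : ν • (E 0 * Estar 0 * E 0) = E 0)
    (hν2 : ν • (Estar 0 * E 0 * Estar 0) = Estar 0)
    (k : Fin (d + 1) → F)
    (hk : ∀ i, k i = ν * LinearMap.trace F V (Estar i * E 0))
    (f : F) (τ : Fin (d + 1) → F)
    (hf : f ≠ 0) (hτ : ∀ i, τ i ≠ 0) (hτ0 : τ 0 = 1)
    (hW : W = f • ∑ i, τ i • E i)
    (γ : F) (hγ : γ = f⁻¹ * LinearMap.trace F V (Wstar * E 0)) :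
    γ = ν⁻¹ * ∑ i, k i * τ i :=
  gamma_eq_sum_ki_tau_general d A Astar W Wstar hB hbal E Estar hEstar ν hν0 k hk f τ hf hW γ hγ
end
end

section
/- Let A, A* be a Leonard pair on V, let W be an invertible element of ⟨A⟩, and let W* be an invertible element of ⟨A*⟩. Then the following four conditions are equivalent: (1) W A* W^{-1} = (W*)^{-1} A W*; (2) W^{-1} A* W = W* A (W*)^{-1}; (3) W* W A* = A W* W; (4) A* W W* = W W* A. -/
noncomputable section

open Finset

variable {F V : Type*} [Field F] [AddCommGroup V] [Module F V]

/-!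
Conditions (1) ⟺ (3) and (2) ⟺ (4) are rearrangements using only that `W`, `W*` are
invertible. For (3) ⟺ (4), take a basis in which `A` is irreducible tridiagonal and `A*`
is diagonal. A diagonal `K` with `K A` symmetric exists (its ratios `kᵢ₊₁ / kᵢ` are the
ratios of super- to subdiagonal entries of `A`), so `X ↦ K⁻¹ Xᵀ K` is an anti-automorphism
of `End V` fixing `A` and `A*`, hence fixing `⟨A⟩` and `⟨A*⟩` pointwise. It maps equation
(3) to (4) and back.
-/

open MulOpposite Matrix

section Conjugation

variable {M₀ : Type*} [MonoidWithZero M₀] {w w' : M₀}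

theorem conj_eq_inverse_conj_iff (hw : IsUnit w) (hw' : IsUnit w') (a b : M₀) :
    w * a * Ring.inverse w = Ring.inverse w' * b * w' ↔ w' * w * a = b * (w' * w) := by
  lift w to M₀ˣ using hw
  lift w' to M₀ˣ using hw'
  rw [Ring.inverse_unit, Ring.inverse_unit, Units.mul_inv_eq_iff_eq_mul, mul_assoc _ b,
    mul_assoc, Units.eq_inv_mul_iff_mul_eq, ← mul_assoc, ← mul_assoc]

theorem inverse_conj_eq_conj_iff (hw : IsUnit w) (hw' : IsUnit w') (a b : M₀) :
    Ring.inverse w * a * w = w' * b * Ring.inverse w' ↔ a * (w * w') = w * w' * b := by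
  lift w to M₀ˣ using hw
  lift w' to M₀ˣ using hw'
  rw [Ring.inverse_unit, Ring.inverse_unit, mul_assoc, Units.inv_mul_eq_iff_eq_mul,
    ← mul_assoc (w : M₀), Units.eq_mul_inv_iff_mul_eq]
  simp only [mul_assoc]

end Conjugation

theorem mul_eq_mul_of_antiHom_fixed {M G : Type*} [Monoid M] [FunLike G M Mᵐᵒᵖ]
    [MonoidHomClass G M Mᵐᵒᵖ] (σ : G) {p q a b : M} (hp : σ p = op p) (hq : σ q = op q)
    (ha : σ a = op a) (hb : σ b = op b) (h : p * q * b = a * (p * q)) :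
    b * (q * p) = q * p * a := by
  have h' := congrArg (fun x => unop (σ x)) h
  simpa only [map_mul, hp, hq, ha, hb, unop_mul, unop_op, mul_assoc] using h'

theorem AlgHom.apply_eq_op_of_mem_adjoin_singleton {R A : Type*} [CommSemiring R] [Semiring A]
    [Algebra R A] (σ : A →ₐ[R] Aᵐᵒᵖ) {a x : A} (ha : σ a = op a)
    (hx : x ∈ Algebra.adjoin R {a}) : σ x = op x := by
  rw [Algebra.adjoin_singleton_eq_range_aeval] at hx
  obtain ⟨p, rfl⟩ := (AlgHom.mem_range _).mp hx
  rw [← Polynomial.aeval_algHom_apply, ha, Polynomial.aeval_op_apply]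

section TwistedTranspose

variable {n : Type*} [Fintype n] [DecidableEq n] (k : n → Fˣ)

/-- The adjoint for the symmetric bilinear form with Gram matrix `diagonal k`. -/
def twistedTranspose : Matrix n n F →ₐ[F] (Matrix n n F)ᵐᵒᵖ where
  toFun X := op (diagonal (fun i => ((k i)⁻¹ : F)) * Xᵀ * diagonal (fun i => (k i : F)))
  map_one' := by simp [diagonal_mul_diagonal]
  map_mul' X Y := by
    set D := diagonal (fun i => (k i : F))
    set D' := diagonal (fun i => ((k i)⁻¹ : F))
    have hDD' : D * D' = 1 := by simp [D, D', diagonal_mul_diagonal]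
    rw [← op_mul, transpose_mul]
    congr 1
    calc D' * (Yᵀ * Xᵀ) * D = D' * Yᵀ * (D * D') * Xᵀ * D := by
          simp only [hDD', Matrix.mul_one, Matrix.mul_assoc]
      _ = D' * Yᵀ * D * (D' * Xᵀ * D) := by simp only [Matrix.mul_assoc]
  map_zero' := by simp
  map_add' X Y := by simp [Matrix.mul_add, Matrix.add_mul]
  commutes' r := by
    simp [algebraMap_eq_diagonal, Pi.algebraMap_def, diagonal_mul_diagonal, mul_right_comm _ r]

theorem twistedTranspose_apply (X : Matrix n n F) :
    twistedTranspose k X =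
      op (diagonal (fun i => ((k i)⁻¹ : F)) * Xᵀ * diagonal (fun i => (k i : F))) :=
  rfl

theorem twistedTranspose_eq_op_of_isDiag {D : Matrix n n F} (hD : D.IsDiag) :
    twistedTranspose k D = op D := by
  rw [twistedTranspose_apply, ← hD.diagonal_diag, diagonal_transpose, diagonal_mul_diagonal,
    diagonal_mul_diagonal]
  congr 2
  funext i
  field_simp

theorem twistedTranspose_eq_op_of_mul_eq {M : Matrix n n F}
    (hM : ∀ i j, (k i : F) * M i j = M j i * k j) :
    twistedTranspose k M = op M := by
  rw [twistedTranspose_apply]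
  congr 1
  ext i j
  simp only [diagonal_mul, mul_diagonal, transpose_apply]
  rw [mul_assoc, ← hM, inv_mul_cancel_left₀ (k i).ne_zero]

end TwistedTranspose

section Tridiagonal

variable {d : ℕ} {M : Matrix (Fin (d + 1)) (Fin (d + 1)) F}

def tridiagSymmetrizer (M : Matrix (Fin (d + 1)) (Fin (d + 1)) F) : Fin (d + 1) → F :=
  Fin.induction 1 fun i k => k * (M i.castSucc i.succ / M i.succ i.castSucc)

theorem tridiagSymmetrizer_succ (i : Fin d) :
    tridiagSymmetrizer M i.succ =
      tridiagSymmetrizer M i.castSucc * (M i.castSucc i.succ / M i.succ i.castSucc) :=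
  Fin.induction_succ _ _ _

theorem IsIrredTridiag.tridiagSymmetrizer_ne_zero (hM : IsIrredTridiag M) (i : Fin (d + 1)) :
    tridiagSymmetrizer M i ≠ 0 := by
  induction i using Fin.induction with
  | zero => exact one_ne_zero
  | succ i ih =>
    rw [tridiagSymmetrizer_succ]
    exact mul_ne_zero ih (div_ne_zero (hM.2 _ _ (Or.inl rfl)) (hM.2 _ _ (Or.inr rfl)))

theorem IsIrredTridiag.tridiagSymmetrizer_mul_eq (hM : IsIrredTridiag M) (i j : Fin (d + 1)) :
    tridiagSymmetrizer M i * M i j = M j i * tridiagSymmetrizer M j := by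
  have adjacent : ∀ i j : Fin (d + 1), (i : ℕ) + 1 = j →
      tridiagSymmetrizer M i * M i j = M j i * tridiagSymmetrizer M j := by
    intro i j hij
    obtain ⟨c, rfl, rfl⟩ : ∃ c : Fin d, i = c.castSucc ∧ j = c.succ :=
      ⟨⟨i, by omega⟩, Fin.ext rfl, Fin.ext (by simp [← hij])⟩
    have hsub : M c.succ c.castSucc ≠ 0 := hM.2 _ _ (Or.inr rfl)
    rw [tridiagSymmetrizer_succ]
    field_simp
  rcases eq_or_ne i j with rfl | hne
  · exact mul_comm _ _
  by_cases hij : (i : ℕ) + 1 = j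
  · exact adjacent i j hij
  by_cases hji : (j : ℕ) + 1 = i
  · linear_combination -adjacent j i hji
  have hfar : (i : ℕ) + 1 < j ∨ (j : ℕ) + 1 < i := by
    have := Fin.val_ne_of_ne hne
    omega
  rw [hM.1 i j hfar, hM.1 j i hfar.symm, mul_zero, zero_mul]

end Tridiagonal

theorem IsLeonardPair.exists_antiAlgHom_fixing {d : ℕ} {A Astar : Module.End F V}
    (h : IsLeonardPair d A Astar) :
    ∃ σ : Module.End F V →ₐ[F] (Module.End F V)ᵐᵒᵖ, σ A = op A ∧ σ Astar = op Astar := by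
  obtain ⟨⟨b, hA, hAstar⟩, -⟩ := h
  let e := LinearMap.toMatrixAlgEquiv b
  let k : Fin (d + 1) → Fˣ := fun i =>
    Units.mk0 _ (hA.tridiagSymmetrizer_ne_zero i)
  let σ : Module.End F V →ₐ[F] (Module.End F V)ᵐᵒᵖ :=
    (AlgHom.op e.symm.toAlgHom).comp ((twistedTranspose k).comp e.toAlgHom)
  have hfix : ∀ X, twistedTranspose k (e X) = op (e X) → σ X = op X := fun X hX => by
    simp [σ, hX]
  exact ⟨σ, hfix A (twistedTranspose_eq_op_of_mul_eq k hA.tridiagSymmetrizer_mul_eq),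
    hfix Astar (twistedTranspose_eq_op_of_isDiag k hAstar)⟩

/-- the four conditions defining a Boltzmann pair are equivalent. -/
theorem boltzmann_conditions_tfae {F V : Type*} [Field F] [AddCommGroup V] [Module F V]
    (d : ℕ) (A Astar W Wstar : Module.End F V)
    (hLP : IsLeonardPair d A Astar)
    (hW : W ∈ Algebra.adjoin F {A}) (hWs : Wstar ∈ Algebra.adjoin F {Astar})
    (hWu : IsUnit W) (hWsu : IsUnit Wstar) :
    List.TFAE [
      W * Astar * Ring.inverse W = Ring.inverse Wstar * A * Wstar,
      Ring.inverse W * Astar * W = Wstar * A * Ring.inverse Wstar,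
      Wstar * W * Astar = A * (Wstar * W),
      Astar * (W * Wstar) = W * Wstar * A ] := by
  obtain ⟨σ, hσA, hσAstar⟩ := hLP.exists_antiAlgHom_fixing
  have hσW := σ.apply_eq_op_of_mem_adjoin_singleton hσA hW
  have hσWstar := σ.apply_eq_op_of_mem_adjoin_singleton hσAstar hWs
  tfae_have 1 ↔ 3 := conj_eq_inverse_conj_iff hWu hWsu Astar A
  tfae_have 2 ↔ 4 := inverse_conj_eq_conj_iff hWu hWsu Astar A
  tfae_have 3 → 4 := mul_eq_mul_of_antiHom_fixed σ hσWstar hσW hσA hσAstar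
  tfae_have 4 → 3 := fun h =>
    (mul_eq_mul_of_antiHom_fixed σ hσW hσWstar hσAstar hσA h.symm).symm
  tfae_finish
end
end

section
/- Let A, A* be a spin Leonard pair on V and let W, W* be a Boltzmann pair for A, A*. Then there exists a nonzero scalar α ∈ F such that W* W W* = α · W W* W. -/
noncomputable section

open Finset

variable {F V : Type*} [Field F] [AddCommGroup V] [Module F V]

/-!
The Boltzmann relation `W A* W⁻¹ = W*⁻¹ A W*` says that `W* W` conjugates `A*` into `A`. Take a
basis in which `A` is irreducible tridiagonal and `A*` diagonal, and a diagonal `D` with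
`D Aᵀ = A D`. Then `X ↦ D Xᵀ D⁻¹` is an antiautomorphism fixing `A` and `A*`, hence also `W`
and `W*`; applied to the Boltzmann relation it shows that `W W*` conjugates `A` into `A*`.
As `W` commutes with `A` and `W*` with `A*`, both braid words `W W* W` and `W* W W*` conjugate
`A` into `A*` and `A*` into `A`, so `(W* W W*)(W W* W)⁻¹` commutes with `A` and `A*`. Such an
endomorphism is scalar: it is diagonal because `A*` has distinct eigenvalues (its eigenspaces
are lines, `A*` being irreducible tridiagonal in another basis), and its diagonal is constant
because the superdiagonal of `A` has no zero entry.
-/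

theorem semiconjBy_braid {M : Type*} [Monoid M] {a a' u v : M} (hu : Commute u a)
    (hv : Commute v a') (h₁ : SemiconjBy (v * u) a' a) (h₂ : SemiconjBy (u * v) a a') :
    SemiconjBy (u * v * u) a a' ∧ SemiconjBy (u * v * u) a' a ∧
      SemiconjBy (v * u * v) a a' ∧ SemiconjBy (v * u * v) a' a := by
  refine ⟨h₂.mul_left hu, ?_, ?_, h₁.mul_left hv⟩
  · simpa only [mul_assoc] using SemiconjBy.mul_left hu h₁
  · simpa only [mul_assoc] using SemiconjBy.mul_left hv h₂

namespace Matrix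

variable {n R : Type*} [Fintype n] [DecidableEq n] [CommRing R]

theorem semiconjBy_transpose_of_mem_adjoin {D M X : Matrix n n R} (hM : SemiconjBy D Mᵀ M)
    (hX : X ∈ Algebra.adjoin R {M}) : SemiconjBy D Xᵀ X := by
  induction hX using Algebra.adjoin_induction with
  | mem x hx => rwa [Set.mem_singleton_iff.mp hx]
  | algebraMap r =>
    rw [show (algebraMap R (Matrix n n R) r)ᵀ = algebraMap R _ r by
      simp [algebraMap_eq_diagonal]]
    exact (Algebra.commutes r D).symm
  | add x y _ _ hx hy => rw [transpose_add]; exact hx.add_right hy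
  | mul x y hxM hyM hx hy =>
    rw [transpose_mul, (Algebra.commute_of_mem_adjoin_singleton_of_commute hyM
      (Algebra.commute_of_mem_adjoin_self hxM).symm).eq]
    exact hy.mul_right hx

theorem semiconjBy_mul_comm_of_semiconjBy_transpose {D M N X Y : Matrix n n R} (hD : IsUnit D)
    (hM : SemiconjBy D Mᵀ M) (hN : SemiconjBy D Nᵀ N)
    (hX : X ∈ Algebra.adjoin R {M}) (hY : Y ∈ Algebra.adjoin R {N})
    (h : SemiconjBy (Y * X) N M) : SemiconjBy (X * Y) M N := by
  have hXt := semiconjBy_transpose_of_mem_adjoin hM hX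
  have hYt := semiconjBy_transpose_of_mem_adjoin hN hY
  have ht : Nᵀ * Xᵀ * Yᵀ = Xᵀ * Yᵀ * Mᵀ := by
    simpa only [SemiconjBy, transpose_mul, mul_assoc] using congrArg transpose h
  refine hD.mul_right_cancel ?_
  calc X * Y * M * D = D * (Xᵀ * Yᵀ * Mᵀ) := ((hXt.mul_right hYt).mul_right hM).eq.symm
    _ = D * (Nᵀ * Xᵀ * Yᵀ) := by rw [ht]
    _ = N * (X * Y) * D := by rw [((hN.mul_right hXt).mul_right hYt).eq, mul_assoc N]

theorem isDiag_of_commute_diagonal [IsDomain R] {P : Matrix n n R} {θ : n → R}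
    (hθ : Function.Injective θ) (h : Commute P (diagonal θ)) : P.IsDiag := by
  intro i j hij
  have hij' := congrFun (congrFun h.eq i) j
  rw [mul_diagonal, diagonal_mul] at hij'
  have : (θ j - θ i) * P i j = 0 := by linear_combination hij'
  exact (mul_eq_zero.mp this).resolve_left (sub_ne_zero.mpr (hθ.ne hij).symm)

end Matrix

namespace IsIrredTridiag

open Matrix

variable {d : ℕ} {M : Matrix (Fin (d + 1)) (Fin (d + 1)) F}

theorem exists_semiconjBy_transpose (hM : IsIrredTridiag M) :
    ∃ lam : Fin (d + 1) → F, (∀ i, lam i ≠ 0) ∧ SemiconjBy (diagonal lam) Mᵀ M := by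
  have hsup (k : Fin d) : M k.castSucc k.succ ≠ 0 := hM.2 _ _ (Or.inl rfl)
  have hsub (k : Fin d) : M k.succ k.castSucc ≠ 0 := hM.2 _ _ (Or.inr rfl)
  obtain ⟨lam, hlam0, hlam_succ⟩ : ∃ lam : Fin (d + 1) → F, lam 0 = 1 ∧
      ∀ k : Fin d, lam k.succ = lam k.castSucc * (M k.succ k.castSucc / M k.castSucc k.succ) :=
    ⟨Fin.partialProd _, Fin.partialProd_zero _, Fin.partialProd_succ _⟩
  have hlam (i : Fin (d + 1)) : lam i ≠ 0 := by
    induction i using Fin.induction with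
    | zero => simp [hlam0]
    | succ k ih =>
      rw [hlam_succ]
      exact mul_ne_zero ih (div_ne_zero (hsub k) (hsup k))
  have hsymm (i j : Fin (d + 1)) : lam i * M j i = M i j * lam j := by
    wlog hij : i ≤ j generalizing i j
    · linear_combination -this j i (le_of_not_ge hij)
    obtain rfl | hij := hij.eq_or_lt
    · ring
    obtain hfar | hnext : (i : ℕ) + 1 < j ∨ (i : ℕ) + 1 = j := by omega
    · rw [hM.1 i j (Or.inl hfar), hM.1 j i (Or.inr hfar), mul_zero, zero_mul]
    · obtain ⟨k, rfl, rfl⟩ : ∃ k : Fin d, k.castSucc = i ∧ k.succ = j :=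
        ⟨⟨i, by omega⟩, rfl, Fin.ext hnext⟩
      rw [hlam_succ]
      field_simp [hsup k]
  refine ⟨lam, hlam, ?_⟩
  ext i j
  simp only [diagonal_mul, mul_diagonal, transpose_apply, hsymm]

theorem eq_zero_of_mulVec_eq_smul (hM : IsIrredTridiag M) {θ : F} {x : Fin (d + 1) → F}
    (hx : M *ᵥ x = θ • x) (h0 : x 0 = 0) : x = 0 := by
  suffices ∀ i, ∀ j ≤ i, x j = 0 from funext fun i ↦ this i i le_rfl
  intro i
  induction i using Fin.induction with
  | zero => intro j hj; rwa [nonpos_iff_eq_zero.mp hj]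
  | succ k ih =>
    have hrow := congrFun hx k.castSucc
    rw [Pi.smul_apply, ih _ le_rfl, smul_zero, mulVec, dotProduct,
      Finset.sum_eq_single k.succ] at hrow
    · have hk : x k.succ = 0 := (mul_eq_zero.mp hrow).resolve_left (hM.2 _ _ (Or.inl rfl))
      intro j hj
      obtain hj | rfl := hj.lt_or_eq
      · exact ih j (Fin.le_castSucc_iff.mpr hj)
      · exact hk
    · intro j _ hj
      obtain hj' | hj' := le_or_gt j k.castSucc
      · rw [ih j hj', mul_zero]
      · rw [hM.1 _ _ (Or.inl ?_), zero_mul]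
        have := Fin.val_ne_of_ne hj
        simp only [Fin.lt_def, Fin.val_castSucc, Fin.val_succ] at hj' this ⊢
        omega
    · simp

theorem eq_of_commute_diagonal (hM : IsIrredTridiag M) {p : Fin (d + 1) → F}
    (h : Commute (diagonal p) M) (i : Fin (d + 1)) : p i = p 0 := by
  induction i using Fin.induction with
  | zero => rfl
  | succ k ih =>
    have hk := congrFun (congrFun h.eq k.castSucc) k.succ
    rw [mul_diagonal, diagonal_mul, mul_comm] at hk
    rw [← ih]
    exact (mul_left_cancel₀ (hM.2 _ _ (Or.inl rfl)) hk).symm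

end IsIrredTridiag

theorem Module.Basis.apply_eq_smul_of_isDiag_toMatrix {ι : Type*} [Fintype ι] [DecidableEq ι]
    (b : Module.Basis ι F V) {f : Module.End F V} (hf : (LinearMap.toMatrix b b f).IsDiag)
    (i : ι) : f (b i) = (LinearMap.toMatrix b b f).diag i • b i := by
  refine b.ext_elem fun k ↦ ?_
  rw [← LinearMap.toMatrix_apply, map_smul, b.repr_self, Finsupp.smul_apply,
    Finsupp.single_apply]
  by_cases hki : i = k
  · subst hki; simp
  · simp [hki, hf (Ne.symm hki)]

theorem injective_diag_toMatrix_of_isIrredTridiag {d : ℕ} {f : Module.End F V}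
    (b b' : Module.Basis (Fin (d + 1)) F V) (hf : IsIrredTridiag (LinearMap.toMatrix b' b' f))
    (hb : (LinearMap.toMatrix b b f).IsDiag) :
    Function.Injective (LinearMap.toMatrix b b f).diag := by
  have hzero (θ : F) (w : V) (hw : f w = θ • w) (h0 : b'.repr w 0 = 0) : w = 0 := by
    have hx : (LinearMap.toMatrix b' b' f).mulVec (b'.repr w) = θ • b'.repr w := by
      rw [LinearMap.toMatrix_mulVec_repr, hw, map_smul, Finsupp.coe_smul]
    have := hf.eq_zero_of_mulVec_eq_smul hx h0
    exact b'.repr.map_eq_zero_iff.mp (DFunLike.coe_injective this)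
  intro i j hθ
  by_contra hij
  set c : Fin (d + 1) → F := fun k ↦ b'.repr (b k) 0
  have hv := hzero ((LinearMap.toMatrix b b f).diag i) (c j • b i - c i • b j)
    (by rw [map_sub, map_smul, map_smul, b.apply_eq_smul_of_isDiag_toMatrix hb,
      b.apply_eq_smul_of_isDiag_toMatrix hb, ← hθ, smul_sub, smul_comm (c j), smul_comm (c i)])
    (by simp only [c, map_sub, map_smul, Finsupp.sub_apply, Finsupp.smul_apply, smul_eq_mul]; ring)
  have hci : c i = 0 := by
    simpa [hij] using congrArg (fun w ↦ b.repr w j) hv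
  exact b.ne_zero i (hzero _ _ (b.apply_eq_smul_of_isDiag_toMatrix hb i) hci)

namespace IsLeonardPair

open Matrix

variable {d : ℕ} {A Astar : Module.End F V}

theorem exists_eq_smul_one_of_commute (hLP : IsLeonardPair d A Astar) {X : Module.End F V}
    (hA : Commute X A) (hAs : Commute X Astar) : ∃ c : F, X = c • 1 := by
  obtain ⟨⟨b, hAb, hAsb⟩, ⟨b', hAsb', -⟩⟩ := hLP
  let e := LinearMap.toMatrixAlgEquiv b
  have he (f : Module.End F V) : e f = LinearMap.toMatrix b b f := rfl
  have hXdiag : (e X).IsDiag := isDiag_of_commute_diagonal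
    (injective_diag_toMatrix_of_isIrredTridiag b b' hAsb' hAsb)
    (by rw [hAsb.diagonal_diag]; exact hAs.map e)
  have hconst := hAb.eq_of_commute_diagonal
    (by rw [hXdiag.diagonal_diag, ← he]; exact hA.map e)
  refine ⟨e X 0 0, e.injective ?_⟩
  rw [map_smul, map_one, smul_one_eq_diagonal, ← hXdiag.diagonal_diag]
  exact congrArg diagonal (funext hconst)

theorem semiconjBy_mul_comm (hLP : IsLeonardPair d A Astar)
    {X Y : Module.End F V} (hX : X ∈ Algebra.adjoin F {A}) (hY : Y ∈ Algebra.adjoin F {Astar})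
    (h : SemiconjBy (Y * X) Astar A) : SemiconjBy (X * Y) A Astar := by
  obtain ⟨⟨b, hAb, hAsb⟩, -⟩ := hLP
  let e := LinearMap.toMatrixAlgEquiv b
  have he (f : Module.End F V) : e f = LinearMap.toMatrix b b f := rfl
  have hmap {Z S : Module.End F V} (hZ : Z ∈ Algebra.adjoin F {S}) :
      e Z ∈ Algebra.adjoin F {e S} := by
    rw [← AlgEquiv.coe_toAlgHom e, ← AlgHom.map_adjoin_singleton]
    exact ⟨Z, hZ, rfl⟩
  obtain ⟨lam, hlam, hDA⟩ := hAb.exists_semiconjBy_transpose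
  have hDAs : SemiconjBy (diagonal lam) (e Astar)ᵀ (e Astar) := by
    rw [he, hAsb.isSymm.eq, ← hAsb.diagonal_diag]
    exact commute_diagonal _ _
  rw [← semiconjBy_map_iff e.injective, map_mul]
  exact semiconjBy_mul_comm_of_semiconjBy_transpose
    (isUnit_diagonal.mpr (Pi.isUnit_iff.mpr fun i ↦ (hlam i).isUnit)) hDA hDAs (hmap hX) (hmap hY)
    (by rw [← map_mul]; exact h.map e)

theorem nontrivial (hLP : IsLeonardPair d A Astar) : Nontrivial V :=
  let ⟨⟨b, _⟩, _⟩ := hLP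
  nontrivial_of_ne (b 0) 0 (b.ne_zero 0)

theorem exists_eq_smul_of_semiconjBy (hLP : IsLeonardPair d A Astar) {T T' : Module.End F V}
    (hT : IsUnit T)
    (hTA : SemiconjBy T A Astar) (hTAs : SemiconjBy T Astar A)
    (hT'A : SemiconjBy T' A Astar) (hT'As : SemiconjBy T' Astar A) :
    ∃ c : F, T' = c • T := by
  obtain ⟨t, rfl⟩ := hT
  obtain ⟨c, hc⟩ := hLP.exists_eq_smul_one_of_commute
    (hT'As.mul_left hTAs.units_inv_symm_left) (hT'A.mul_left hTA.units_inv_symm_left)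
  exact ⟨c, by rwa [Units.mul_inv_eq_iff_eq_mul, smul_one_mul] at hc⟩

end IsLeonardPair

/-- for a Boltzmann pair `W, W*` of a spin Leonard pair,
`W* W W*` and `W W* W` agree up to a nonzero scalar factor. -/
theorem boltzmann_WWsW_proportional {F V : Type*} [Field F] [AddCommGroup V] [Module F V]
    (d : ℕ) (A Astar W Wstar : Module.End F V)
    (hLP : IsLeonardPair d A Astar)
    (hB : IsBoltzmannPair A Astar W Wstar) :
    ∃ α : F, α ≠ 0 ∧ Wstar * W * Wstar = α • (W * Wstar * W) := by
  obtain ⟨hW, hWs, ⟨u, rfl⟩, ⟨v, rfl⟩, hconj⟩ := hB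
  have h₁ : SemiconjBy (↑v * ↑u : Module.End F V) Astar A := by
    rw [Ring.inverse_unit, Ring.inverse_unit, Units.mul_inv_eq_iff_eq_mul, mul_assoc, mul_assoc,
      Units.eq_inv_mul_iff_mul_eq] at hconj
    simpa only [SemiconjBy, mul_assoc] using hconj
  have h₂ : SemiconjBy (↑u * ↑v : Module.End F V) A Astar := hLP.semiconjBy_mul_comm hW hWs h₁
  obtain ⟨hTA, hTAs, hT'A, hT'As⟩ := semiconjBy_braid (Algebra.commute_of_mem_adjoin_self hW).symm
    (Algebra.commute_of_mem_adjoin_self hWs).symm h₁ h₂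
  obtain ⟨α, hα⟩ := hLP.exists_eq_smul_of_semiconjBy ((u.isUnit.mul v.isUnit).mul u.isUnit)
    hTA hTAs hT'A hT'As
  have := hLP.nontrivial
  have hT' : IsUnit (↑v * ↑u * ↑v : Module.End F V) := (v.isUnit.mul u.isUnit).mul v.isUnit
  exact ⟨α, left_ne_zero_of_smul (hα ▸ hT'.ne_zero), hα⟩
end
end

section
/- Let A, A* be a spin Leonard pair on V and let W, W* be a Boltzmann pair for A, A*. Then A (W W* W) = (W W* W) A*, A* (W W* W) = (W W* W) A, A (W* W W*) = (W* W W*) A*, and A* (W* W W*) = (W* W W*) A. Consequently the Leonard pair A, A* is self-dual: the algebra automorphism of End(V) given by Y ↦ (W W* W)^{-1} Y (W W* W) sends A ↦ A* and A* ↦ A. -/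
noncomputable section

open Finset

variable {F V : Type*} [Field F] [AddCommGroup V] [Module F V]

/-- recursive sequence of diagonal entries -/
def kseq {n : ℕ} {F : Type*} [Field F] (M : Matrix (Fin (n+1)) (Fin (n+1)) F) : ℕ → F
  | 0 => 1
  | (i+1) =>
    if h : i + 1 < n + 1 then
      kseq M i * M ⟨i+1, h⟩ ⟨i, Nat.lt_of_succ_lt h⟩ / M ⟨i, Nat.lt_of_succ_lt h⟩ ⟨i+1, h⟩
    else 1

lemma kseq_ne_zero {n : ℕ} {M : Matrix (Fin (n+1)) (Fin (n+1)) F}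
    (hT : IsIrredTridiag M) : ∀ i : ℕ, i < n + 1 → kseq M i ≠ 0 := by
  intro i
  induction i with
  | zero => intro _; simp [kseq]
  | succ i ih =>
    intro hlt
    rw [kseq, dif_pos hlt]
    have h1 : M ⟨i+1, hlt⟩ ⟨i, Nat.lt_of_succ_lt hlt⟩ ≠ 0 :=
      hT.2 _ _ (Or.inr rfl)
    have h2 : M ⟨i, Nat.lt_of_succ_lt hlt⟩ ⟨i+1, hlt⟩ ≠ 0 :=
      hT.2 _ _ (Or.inl rfl)
    exact div_ne_zero (mul_ne_zero (ih (Nat.lt_of_succ_lt hlt)) h1) h2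

lemma kseq_key {n : ℕ} {M : Matrix (Fin (n+1)) (Fin (n+1)) F}
    (hT : IsIrredTridiag M) (i j : Fin (n+1)) :
    M i j * kseq M j.val = kseq M i.val * M j i := by
  rcases lt_trichotomy (i : ℕ) (j : ℕ) with h | h | h
  · rcases Nat.lt_or_ge ((i : ℕ) + 1) (j : ℕ) with h2 | h2
    · rw [hT.1 i j (Or.inl h2), hT.1 j i (Or.inr h2)]; ring
    · have hj : (j : ℕ) = (i : ℕ) + 1 := le_antisymm h2 h
      obtain ⟨jv, hjv⟩ := j
      simp only at hj
      subst hj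
      have e1 : (⟨(i:ℕ), Nat.lt_of_succ_lt hjv⟩ : Fin (n+1)) = i := Fin.ext rfl
      rw [show ((⟨(i:ℕ)+1, hjv⟩ : Fin (n+1)) : ℕ) = (i:ℕ)+1 from rfl, kseq, dif_pos hjv, e1]
      have hM : M i ⟨(i:ℕ)+1, hjv⟩ ≠ 0 := hT.2 _ _ (Or.inl rfl)
      field_simp
  · have : i = j := Fin.ext h
    subst this; ring
  · rcases Nat.lt_or_ge ((j : ℕ) + 1) (i : ℕ) with h2 | h2
    · rw [hT.1 i j (Or.inr h2), hT.1 j i (Or.inl h2)]; ring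
    · have hi : (i : ℕ) = (j : ℕ) + 1 := le_antisymm h2 h
      obtain ⟨iv, hiv⟩ := i
      simp only at hi
      subst hi
      have e1 : (⟨(j:ℕ), Nat.lt_of_succ_lt hiv⟩ : Fin (n+1)) = j := Fin.ext rfl
      rw [show ((⟨(j:ℕ)+1, hiv⟩ : Fin (n+1)) : ℕ) = (j:ℕ)+1 from rfl, kseq, dif_pos hiv, e1]
      have hM : M j ⟨(j:ℕ)+1, hiv⟩ ≠ 0 := hT.2 _ _ (Or.inl rfl)
      rw [div_mul_cancel₀ _ hM, mul_comm]

open Matrix in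
lemma exists_antiaut {n : ℕ} (A Astar : Module.End F V) (b : Module.Basis (Fin (n+1)) F V)
    (hT : IsIrredTridiag (LinearMap.toMatrix b b A))
    (hD : (LinearMap.toMatrix b b Astar).IsDiag) :
    ∃ σ : Module.End F V → Module.End F V,
      (∀ X Y, σ (X * Y) = σ Y * σ X) ∧ (∀ X Y, σ (X + Y) = σ X + σ Y) ∧
      (∀ (c : F) (X), σ (c • X) = c • σ X) ∧ σ 1 = 1 ∧ σ A = A ∧ σ Astar = Astar := by
  have e := LinearMap.toMatrixAlgEquiv b
  set M := LinearMap.toMatrix b b A with hM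
  have hknz : ∀ i : Fin (n+1), kseq M i.val ≠ 0 := fun i => kseq_ne_zero hT i.val i.isLt
  set K : Matrix (Fin (n+1)) (Fin (n+1)) F := Matrix.diagonal (fun i => kseq M i.val) with hK
  set K' : Matrix (Fin (n+1)) (Fin (n+1)) F :=
    Matrix.diagonal (fun i => (kseq M i.val)⁻¹) with hK'
  have hKK' : K * K' = 1 := by
    rw [hK, hK', Matrix.diagonal_mul_diagonal]
    rw [show (fun i : Fin (n+1) => kseq M i.val * (kseq M i.val)⁻¹) = fun _ => (1:F) from
      funext fun i => mul_inv_cancel₀ (hknz i)]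
    exact Matrix.diagonal_one
  have hK'K : K' * K = 1 := by
    rw [hK, hK', Matrix.diagonal_mul_diagonal]
    rw [show (fun i : Fin (n+1) => (kseq M i.val)⁻¹ * kseq M i.val) = fun _ => (1:F) from
      funext fun i => inv_mul_cancel₀ (hknz i)]
    exact Matrix.diagonal_one
  refine ⟨fun Y => Matrix.toLin b b (K * (LinearMap.toMatrix b b Y)ᵀ * K'), ?_, ?_, ?_, ?_, ?_, ?_⟩
  · intro X Y
    beta_reduce
    have hmat : K * (LinearMap.toMatrix b b (X * Y))ᵀ * K'
        = (K * (LinearMap.toMatrix b b Y)ᵀ * K') * (K * (LinearMap.toMatrix b b X)ᵀ * K') := by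
      rw [LinearMap.toMatrix_mul, Matrix.transpose_mul]
      simp only [Matrix.mul_assoc]
      rw [show K' * (K * ((LinearMap.toMatrix b b X)ᵀ * K'))
          = (LinearMap.toMatrix b b X)ᵀ * K' from by rw [← Matrix.mul_assoc, hK'K, Matrix.one_mul]]
    rw [hmat, Matrix.toLin_mul b b b]
    rfl
  · intro X Y
    beta_reduce
    have hmat : K * (LinearMap.toMatrix b b (X + Y))ᵀ * K'
        = K * (LinearMap.toMatrix b b X)ᵀ * K' + K * (LinearMap.toMatrix b b Y)ᵀ * K' := by
      rw [map_add, Matrix.transpose_add, Matrix.mul_add, Matrix.add_mul]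
    rw [hmat, map_add]
  · intro c X
    have hmat : K * (LinearMap.toMatrix b b (c • X))ᵀ * K'
        = c • (K * (LinearMap.toMatrix b b X)ᵀ * K') := by
      rw [_root_.map_smul, Matrix.transpose_smul, Matrix.mul_smul, Matrix.smul_mul]
    beta_reduce
    rw [hmat, _root_.map_smul]
  · have hmat : K * (LinearMap.toMatrix b b (1 : Module.End F V))ᵀ * K' = 1 := by
      rw [LinearMap.toMatrix_one, Matrix.transpose_one, Matrix.mul_one, hKK']
    beta_reduce
    rw [hmat, Matrix.toLin_one]
    rfl
  · have hmat : K * Mᵀ * K' = M := by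
      ext i j
      simp only [hK, hK', Matrix.mul_diagonal, Matrix.diagonal_mul, Matrix.transpose_apply]
      rw [mul_comm (kseq M i.val), kseq_key hT j i, mul_comm (kseq M j.val),
        mul_inv_cancel_right₀ (hknz j)]
    beta_reduce
    rw [← hM, hmat, hM, Matrix.toLin_toMatrix]
  · have hmat : K * (LinearMap.toMatrix b b Astar)ᵀ * K' = LinearMap.toMatrix b b Astar := by
      ext i j
      simp only [hK, hK', Matrix.mul_diagonal, Matrix.diagonal_mul, Matrix.transpose_apply]
      by_cases h : i = j
      · subst h
        rw [mul_comm (kseq M i.val), mul_inv_cancel_right₀ (hknz i)]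
      · rw [hD (Ne.symm h), hD h, mul_zero, zero_mul]
    beta_reduce
    rw [hmat, Matrix.toLin_toMatrix]

lemma end_comm_aeval (A : Module.End F V) (p : Polynomial F) :
    A * Polynomial.aeval A p = Polynomial.aeval A p * A := by
  have h1 : A * Polynomial.aeval A p = Polynomial.aeval A (Polynomial.X * p) := by
    rw [map_mul, Polynomial.aeval_X]
  have h2 : Polynomial.aeval A p * A = Polynomial.aeval A (p * Polynomial.X) := by
    rw [map_mul, Polynomial.aeval_X]
  rw [h1, h2, mul_comm]

lemma comm_of_mem_adjoin {A x : Module.End F V} (hx : x ∈ Algebra.adjoin F {A}) :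
    A * x = x * A := by
  rw [Algebra.adjoin_singleton_eq_range_aeval] at hx
  obtain ⟨p, rfl⟩ := hx
  exact end_comm_aeval A p

lemma fix_of_mem_adjoin {σ : Module.End F V → Module.End F V}
    (hmul : ∀ X Y, σ (X * Y) = σ Y * σ X) (hadd : ∀ X Y, σ (X + Y) = σ X + σ Y)
    (hsmul : ∀ (c : F) (X), σ (c • X) = c • σ X) (hone : σ 1 = 1)
    {A : Module.End F V} (hA : σ A = A) {x : Module.End F V}
    (hx : x ∈ Algebra.adjoin F {A}) : σ x = x := by
  rw [Algebra.adjoin_singleton_eq_range_aeval] at hx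
  obtain ⟨p, rfl⟩ := hx
  show σ (Polynomial.aeval A p) = Polynomial.aeval A p
  induction p using Polynomial.induction_on with
  | C a =>
    rw [Polynomial.aeval_C, Algebra.algebraMap_eq_smul_one, hsmul, hone]
  | add p q hp hq => rw [map_add, hadd, hp, hq]
  | monomial m a hp =>
    have h1 : (Polynomial.C a * Polynomial.X ^ (m + 1))
        = (Polynomial.C a * Polynomial.X ^ m) * Polynomial.X := by ring
    rw [h1, map_mul, Polynomial.aeval_X, hmul, hA, hp]
    exact end_comm_aeval A _

/-- `W W* W` and `W* W W*` interchange `A` and `A*`; consequently a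
spin Leonard pair is self-dual, via conjugation by `W W* W`. -/
theorem spin_leonard_pair_self_dual {F V : Type*} [Field F] [AddCommGroup V] [Module F V]
    (d : ℕ) (A Astar W Wstar : Module.End F V)
    (hLP : IsLeonardPair d A Astar)
    (hB : IsBoltzmannPair A Astar W Wstar) :
    A * (W * Wstar * W) = (W * Wstar * W) * Astar ∧
    Astar * (W * Wstar * W) = (W * Wstar * W) * A ∧
    A * (Wstar * W * Wstar) = (Wstar * W * Wstar) * Astar ∧
    Astar * (Wstar * W * Wstar) = (Wstar * W * Wstar) * A ∧
    Ring.inverse (W * Wstar * W) * A * (W * Wstar * W) = Astar ∧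
    Ring.inverse (W * Wstar * W) * Astar * (W * Wstar * W) = A := by
  obtain ⟨hW, hWs, hUW, hUWs, hrel⟩ := hB
  obtain ⟨⟨b, hT, hD⟩, -⟩ := hLP
  obtain ⟨σ, hmul, hadd, hsmul, hone, hA, hAs⟩ := exists_antiaut A Astar b hT hD
  have hσW : σ W = W := fix_of_mem_adjoin hmul hadd hsmul hone hA hW
  have hσWs : σ Wstar = Wstar := fix_of_mem_adjoin hmul hadd hsmul hone hAs hWs
  have commAW : A * W = W * A := comm_of_mem_adjoin hW
  have commAsWs : Astar * Wstar = Wstar * Astar := comm_of_mem_adjoin hWs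
  -- the Boltzmann relation without inverses
  have R : Wstar * W * Astar = A * (Wstar * W) := by
    have h := congrArg (fun X => Wstar * (X * W)) hrel
    simp only [mul_assoc] at h ⊢
    rw [Ring.inverse_mul_cancel W hUW, mul_one, Ring.mul_inverse_cancel_left _ _ hUWs] at h
    exact h
  have R_l : A * Wstar * W = Wstar * W * Astar := by rw [mul_assoc]; exact R.symm
  -- apply the anti-automorphism to get the mirror relation
  have R'_l : Astar * W * Wstar = W * Wstar * A := by
    have h := congrArg σ R
    rw [hmul, hmul, hmul, hmul, hσW, hσWs, hA, hAs] at h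
    rw [← mul_assoc] at h
    exact h
  have g1 : A * (W * Wstar * W) = (W * Wstar * W) * Astar := by
    simp only [← mul_assoc]
    rw [commAW, mul_assoc W A Wstar, mul_assoc W (A * Wstar) W, R_l]
    simp only [← mul_assoc]
  have g2 : Astar * (W * Wstar * W) = (W * Wstar * W) * A := by
    simp only [← mul_assoc]
    rw [R'_l, mul_assoc (W * Wstar) A W, commAW, ← mul_assoc]
  have g3 : A * (Wstar * W * Wstar) = (Wstar * W * Wstar) * Astar := by
    simp only [← mul_assoc]
    rw [R_l, mul_assoc (Wstar * W) Astar Wstar, commAsWs, ← mul_assoc]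
  have g4 : Astar * (Wstar * W * Wstar) = (Wstar * W * Wstar) * A := by
    simp only [← mul_assoc]
    rw [commAsWs, mul_assoc Wstar Astar W, mul_assoc Wstar (Astar * W) Wstar, R'_l]
    simp only [← mul_assoc]
  have hUT : IsUnit (W * Wstar * W) := (hUW.mul hUWs).mul hUW
  refine ⟨g1, g2, g3, g4, ?_, ?_⟩
  · rw [mul_assoc, g1, ← mul_assoc, Ring.inverse_mul_cancel _ hUT, one_mul]
  · rw [mul_assoc, g2, ← mul_assoc, Ring.inverse_mul_cancel _ hUT, one_mul]
end
end

section
/- Let Φ = (A; {E_i}_{i=0}^d; A*; {E*_i}_{i=0}^d) be a Leonard system on V, with the scalar ν and the maps ρ : ⟨A⟩ → ⟨A*⟩ and ρ* : ⟨A*⟩ → ⟨A⟩ as in the context. Then ρ and ν·ρ* are mutually inverse; explicitly, ρ*(ρ(Y)) = ν^{-1} Y for all Y ∈ ⟨A⟩ and ρ(ρ*(Z)) = ν^{-1} Z for all Z ∈ ⟨A*⟩. In particular, ρ and ρ* are bijective. -/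
noncomputable section

open Finset

variable {F V : Type*} [Field F] [AddCommGroup V] [Module F V]

/-! The cancellation law `Y E*₀ = 0 → Y = 0` on `⟨A⟩` holds because `E*₀ V` is spanned by a
vector `v` that is cyclic for `A` (the matrix of `A` in a basis starting with `v` is irreducible
tridiagonal) and `Y` commutes with `A`. Given this law, `ρ*(ρ(Y)) E*₀ = Y E*₀ E₀ E*₀ = ν⁻¹ Y E*₀`
forces `ρ*(ρ(Y)) = ν⁻¹ Y`; the other composite is symmetric, and bijectivity follows. -/

theorem IsIrredTridiag.basis_succ_mem {d : ℕ} {B : Module.End F V}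
    {b : Module.Basis (Fin (d + 1)) F V} (hB : IsIrredTridiag (LinearMap.toMatrix b b B))
    {W : Submodule F V} (hW : W ≤ W.comap B) {i : Fin d} (hi : ∀ j ≤ i.castSucc, b j ∈ W) :
    b i.succ ∈ W := by
  classical
  have hBbi : ∑ j, LinearMap.toMatrix b b B j i.castSucc • b j ∈ W := by
    simp only [LinearMap.toMatrix_apply, b.sum_repr]
    exact hW (hi _ le_rfl)
  rw [← Finset.add_sum_erase _ _ (Finset.mem_univ i.succ)] at hBbi
  have hrest :
      ∑ j ∈ Finset.univ.erase i.succ, LinearMap.toMatrix b b B j i.castSucc • b j ∈ W := by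
    refine W.sum_mem fun j hj => ?_
    rcases le_or_gt j i.castSucc with hji | hij
    · exact W.smul_mem _ (hi j hji)
    · have hj' : (i : ℕ) + 1 < j := by
        have := Finset.ne_of_mem_erase hj
        rw [Fin.lt_def, Fin.val_castSucc] at hij
        rw [Ne, Fin.ext_iff, Fin.val_succ] at this
        omega
      rw [hB.1 j i.castSucc (Or.inr hj'), zero_smul]
      exact W.zero_mem
  exact (W.smul_mem_iff (hB.2 _ _ (Or.inr rfl))).1 ((W.add_mem_iff_left hrest).1 hBbi)

theorem IsIrredTridiag.eq_top_of_basis_zero_mem {d : ℕ} {B : Module.End F V}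
    {b : Module.Basis (Fin (d + 1)) F V} (hB : IsIrredTridiag (LinearMap.toMatrix b b B))
    {W : Submodule F V} (hW : W ≤ W.comap B) (h0 : b 0 ∈ W) : W = ⊤ := by
  have hle : ∀ k : Fin (d + 1), ∀ j ≤ k, b j ∈ W := by
    intro k
    induction k using Fin.induction with
    | zero => intro j hj; rwa [nonpos_iff_eq_zero.1 hj]
    | succ i ih =>
      intro j hj
      rcases hj.lt_or_eq with hj | rfl
      · exact ih j (Fin.le_castSucc_iff.2 hj)
      · exact hB.basis_succ_mem hW ih
  refine eq_top_iff.2 (b.span_eq ▸ Submodule.span_le.2 ?_)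
  rintro _ ⟨j, rfl⟩
  exact hle (Fin.last d) j (Fin.le_last j)

theorem IsIrredTridiag.eq_zero_of_commute {d : ℕ} {B X : Module.End F V}
    {b : Module.Basis (Fin (d + 1)) F V} (hB : IsIrredTridiag (LinearMap.toMatrix b b B))
    (hX : Commute B X) (h0 : X (b 0) = 0) : X = 0 := by
  refine LinearMap.ker_eq_top.1 (hB.eq_top_of_basis_zero_mem (fun v hv => ?_) h0)
  simp only [Submodule.mem_comap, LinearMap.mem_ker] at hv ⊢
  rw [← Module.End.mul_apply, ← hX.eq, Module.End.mul_apply, hv, map_zero]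

theorem IsStandardOrdering.eq_zero_of_mul_eq_zero {d : ℕ} {B C : Module.End F V}
    {E : Fin (d + 1) → Module.End F V} (hE : IsStandardOrdering d B C E)
    {Y : Module.End F V} (hY : Y ∈ Algebra.adjoin F {C}) (h0 : Y * E 0 = 0) : Y = 0 := by
  obtain ⟨-, b, hbE, hC, -⟩ := hE
  refine hC.eq_zero_of_commute (Algebra.commute_of_mem_adjoin_self hY) ?_
  rw [← hbE 0, ← Module.End.mul_apply, h0, LinearMap.zero_apply]

theorem smul_apply_apply_eq_self_of_mul_cancel {R : Type*} [Ring R] [Algebra F R]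
    {S : Subalgebra F R} {T : Set R} {e f : R} {ν : F} {ρ σ : R → R}
    (hS : ∀ Y ∈ S, Y * f = 0 → Y = 0) (hfef : ν • (f * e * f) = f)
    (hρ : ∀ Y ∈ S, ρ Y ∈ T ∧ Y * f * e = ρ Y * e)
    (hσ : ∀ Z ∈ T, σ Z ∈ S ∧ Z * e * f = σ Z * f) :
    ∀ Y ∈ S, ν • σ (ρ Y) = Y := by
  intro Y hY
  obtain ⟨hρY, hρe⟩ := hρ Y hY
  obtain ⟨hσρY, hσf⟩ := hσ _ hρY
  refine sub_eq_zero.1 (hS _ (sub_mem (S.smul_mem hσρY ν) hY) ?_)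
  calc (ν • σ (ρ Y) - Y) * f = Y * (ν • (f * e * f)) - Y * f := by
        rw [sub_mul, smul_mul_assoc, ← hσf, ← hρe, mul_smul_comm]
        simp only [mul_assoc]
    _ = 0 := by rw [hfef, sub_self]

theorem Set.bijOn_of_smul_apply_apply_eq {K M N : Type*} [GroupWithZero K] [MulAction K M]
    [MulAction K N] {f : M → N} {g : N → M} {s : Set M} {t : Set N} {c : K} (hc : c ≠ 0)
    (hf : Set.MapsTo f s t) (hg : Set.MapsTo g t s) (ht : ∀ y ∈ t, c • y ∈ t)
    (hgf : ∀ x ∈ s, c • g (f x) = x) (hfg : ∀ y ∈ t, c • f (g y) = y) :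
    Set.BijOn f s t := by
  refine ⟨hf, fun x₁ hx₁ x₂ hx₂ h => ?_, fun y hy => ⟨g (c • y), hg (ht y hy), ?_⟩⟩
  · rw [← hgf x₁ hx₁, ← hgf x₂ hx₂, h]
  · exact MulAction.injective₀ hc (hfg _ (ht y hy))

/-- the maps `ρ` and `ν ρ*` are mutually inverse;
in particular `ρ`, `ρ*` are bijective. -/
theorem rho_rhostar_inverse {F V : Type*} [Field F] [AddCommGroup V] [Module F V]
    (d : ℕ) (A Astar : Module.End F V) (E Estar : Fin (d + 1) → Module.End F V)
    (hLS : IsLeonardSystem d A Astar E Estar)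
    (ν : F) (hν0 : ν ≠ 0)
    (hν1 : ν • (E 0 * Estar 0 * E 0) = E 0)
    (hν2 : ν • (Estar 0 * E 0 * Estar 0) = Estar 0)
    (ρ ρs : Module.End F V → Module.End F V)
    (hρ : ∀ Y ∈ Algebra.adjoin F {A}, ρ Y ∈ Algebra.adjoin F {Astar} ∧
      Y * Estar 0 * E 0 = ρ Y * E 0)
    (hρs : ∀ Z ∈ Algebra.adjoin F {Astar}, ρs Z ∈ Algebra.adjoin F {A} ∧
      Z * E 0 * Estar 0 = ρs Z * Estar 0) :
    (∀ Y ∈ Algebra.adjoin F {A}, ρs (ρ Y) = ν⁻¹ • Y) ∧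
    (∀ Z ∈ Algebra.adjoin F {Astar}, ρ (ρs Z) = ν⁻¹ • Z) ∧
    Set.BijOn ρ (Algebra.adjoin F {A} : Set (Module.End F V))
      (Algebra.adjoin F {Astar} : Set (Module.End F V)) ∧
    Set.BijOn ρs (Algebra.adjoin F {Astar} : Set (Module.End F V))
      (Algebra.adjoin F {A} : Set (Module.End F V)) := by
  obtain ⟨-, hE, hEs⟩ := hLS
  have hρsρ : ∀ Y ∈ Algebra.adjoin F {A}, ν • ρs (ρ Y) = Y :=
    smul_apply_apply_eq_self_of_mul_cancel (fun _ => hEs.eq_zero_of_mul_eq_zero) hν2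
      hρ hρs
  have hρρs : ∀ Z ∈ Algebra.adjoin F {Astar}, ν • ρ (ρs Z) = Z :=
    smul_apply_apply_eq_self_of_mul_cancel (fun _ => hE.eq_zero_of_mul_eq_zero) hν1
      hρs hρ
  refine ⟨fun Y hY => (eq_inv_smul_iff₀ hν0).2 (hρsρ Y hY),
    fun Z hZ => (eq_inv_smul_iff₀ hν0).2 (hρρs Z hZ), ?_, ?_⟩
  · exact Set.bijOn_of_smul_apply_apply_eq hν0 (fun Y hY => (hρ Y hY).1)
      (fun Z hZ => (hρs Z hZ).1) (fun Z hZ => Subalgebra.smul_mem _ hZ ν) hρsρ hρρs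
  · exact Set.bijOn_of_smul_apply_apply_eq hν0 (fun Z hZ => (hρs Z hZ).1)
      (fun Y hY => (hρ Y hY).1) (fun Y hY => Subalgebra.smul_mem _ hY ν) hρρs hρsρ
end
end

section
/- Let Φ = (A; {E_i}_{i=0}^d; A*; {E*_i}_{i=0}^d) be a Leonard system on V, with ν, ρ*, A_i = ν ρ*(E*_i), and k_i = ν tr(E*_i E_0) as in the context. Then A_i E_0 = k_i E_0 for 0 ≤ i ≤ d. -/
noncomputable section

open Finset

variable {F V : Type*} [Field F] [AddCommGroup V] [Module F V]

/-!
`E₀` is the rank-one projection onto the first vector of a basis adapted to the `Eᵢ`, so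
`E₀ X E₀ = tr(X E₀) E₀` for every `X`. Since `Aᵢ ∈ ⟨A⟩` commutes with `E₀`, the relations
`ν E₀E*₀E₀ = E₀` and `Aᵢ E*₀ = ν E*ᵢE₀E*₀` give `Aᵢ E₀ = ν E₀E*ᵢE₀ = ν tr(E*ᵢE₀) E₀ = kᵢ E₀`.
-/

open Module

section RankOne

variable {R M : Type*} [CommRing R] [AddCommGroup M] [Module R M]

theorem Module.End.mul_smulRight (X : End R M) (f : Dual R M) (x : M) :
    X * f.smulRight x = f.smulRight (X x) := by
  ext v
  simp

theorem LinearMap.smulRight_mul_mul_smulRight_self (f : Dual R M) (x : M) (X : End R M) :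
    f.smulRight x * X * f.smulRight x = f (X x) • f.smulRight x := by
  ext v
  simp [smul_smul, mul_comm]

theorem LinearMap.trace_mul_smulRight [Free R M] [Module.Finite R M]
    (X : End R M) (f : Dual R M) (x : M) :
    trace R M (X * f.smulRight x) = f (X x) := by
  rw [End.mul_smulRight, trace_smulRight]

theorem eq_coord_smulRight_of_orthogonal {ι : Type*} [DecidableEq ι] {E : ι → End R M}
    (b : Basis ι R M) (horth : ∀ i j, E i * E j = if i = j then E i else 0)
    (hEb : ∀ i, E i (b i) = b i) (j : ι) :
    E j = (b.coord j).smulRight (b j) := by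
  refine b.ext fun l => ?_
  have hEjl : E j (b l) = (E j * E l) (b l) := by rw [End.mul_apply, hEb]
  rw [hEjl, horth, LinearMap.smulRight_apply, Basis.coord_apply, Basis.repr_self]
  by_cases h : j = l
  · subst h; simp [hEb]
  · simp [h, Finsupp.single_eq_of_ne h]

end RankOne

theorem commute_of_orthogonal {ι R : Type*} [Semiring R] [DecidableEq ι] {E : ι → R}
    (horth : ∀ i j, E i * E j = if i = j then E i else 0) (i j : ι) :
    Commute (E i) (E j) := by
  by_cases h : i = j
  · rw [h]
  · rw [Commute, SemiconjBy, horth, horth, if_neg h, if_neg (Ne.symm h)]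

theorem commute_sum_smul_of_orthogonal {ι S R : Type*} [Fintype ι] [DecidableEq ι]
    [CommSemiring S] [Semiring R] [Algebra S R] {E : ι → R}
    (horth : ∀ i j, E i * E j = if i = j then E i else 0) (θ : ι → S) (j : ι) :
    Commute (E j) (∑ i, θ i • E i) :=
  Commute.sum_right _ _ _ fun i _ => (commute_of_orthogonal horth j i).smul_right (θ i)

theorem mul_eq_smul_mul_mul_of_commute {S R : Type*} [CommSemiring S] [Semiring R] [Algebra S R]
    {X E Es Es' : R} {ν : S} (hν : ν • (E * Es * E) = E) (hXE : Commute X E)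
    (hXEs : X * Es = ν • (Es' * E * Es)) :
    X * E = ν • (E * Es' * E) :=
  calc X * E = ν • (X * E * Es * E) := by
          conv_lhs => rw [← hν]
          simp only [mul_smul_comm, mul_assoc]
    _ = ν • (E * (X * Es) * E) := by rw [hXE.eq]; simp only [mul_assoc]
    _ = ν • (E * Es' * (ν • (E * Es * E))) := by
          rw [hXEs]; simp only [mul_smul_comm, smul_mul_assoc, mul_assoc]
    _ = ν • (E * Es' * E) := by rw [hν]

theorem Ai_E0_eq_ki_E0_general {F V : Type*} [Field F] [AddCommGroup V] [Module F V]
    (d : ℕ) (A Astar : Module.End F V) (E Estar : Fin (d + 1) → Module.End F V)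
    (hLS : IsLeonardSystem d A Astar E Estar)
    (ν : F)
    (hν1 : ν • (E 0 * Estar 0 * E 0) = E 0)
    (Ai : Fin (d + 1) → Module.End F V)
    (hAi : ∀ i, Ai i ∈ Algebra.adjoin F {A} ∧
      Ai i * Estar 0 = ν • (Estar i * E 0 * Estar 0))
    (k : Fin (d + 1) → F)
    (hk : ∀ i, k i = ν * LinearMap.trace F V (Estar i * E 0)) :
    ∀ i, Ai i * E 0 = k i • E 0 := by
  intro i
  obtain ⟨-, ⟨⟨-, horth, -, θ, -, rfl⟩, b, hEb, -⟩, -⟩ := hLS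
  have := Module.Free.of_basis b
  have := Module.Finite.of_basis b
  have hcomm : Commute (E 0) (Ai i) :=
    Algebra.commute_of_mem_adjoin_singleton_of_commute (hAi i).1
      (commute_sum_smul_of_orthogonal horth θ 0)
  have hE0 := eq_coord_smulRight_of_orthogonal b horth hEb 0
  rw [mul_eq_smul_mul_mul_of_commute hν1 hcomm.symm (hAi i).2, hk, hE0,
    LinearMap.smulRight_mul_mul_smulRight_self, LinearMap.trace_mul_smulRight, smul_smul]

/-- `Aᵢ E₀ = kᵢ E₀` for `0 ≤ i ≤ d`, where `Aᵢ = ν ρ*(E*ᵢ)` and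
`kᵢ = ν tr(E*ᵢ E₀)`. -/
theorem Ai_E0_eq_ki_E0 {F V : Type*} [Field F] [AddCommGroup V] [Module F V]
    (d : ℕ) (A Astar : Module.End F V) (E Estar : Fin (d + 1) → Module.End F V)
    (hLS : IsLeonardSystem d A Astar E Estar)
    (ν : F) (hν0 : ν ≠ 0)
    (hν1 : ν • (E 0 * Estar 0 * E 0) = E 0)
    (hν2 : ν • (Estar 0 * E 0 * Estar 0) = Estar 0)
    (Ai : Fin (d + 1) → Module.End F V)
    (hAi : ∀ i, Ai i ∈ Algebra.adjoin F {A} ∧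
      Ai i * Estar 0 = ν • (Estar i * E 0 * Estar 0))
    (k : Fin (d + 1) → F)
    (hk : ∀ i, k i = ν * LinearMap.trace F V (Estar i * E 0)) :
    ∀ i, Ai i * E 0 = k i • E 0 :=
  Ai_E0_eq_ki_E0_general d A Astar E Estar hLS ν hν1 Ai hAi k hk
end
end

section
/- Let Φ = (A; {E_i}_{i=0}^d; A*; {E*_i}_{i=0}^d) be a Leonard system on V, with ν, ρ*, A_i = ν ρ*(E*_i), and k_i = ν tr(E*_i E_0) as in the context. The elements {A_i}_{i=0}^d form a basis of ⟨A⟩; let p^h_{ij} ∈ F be the structure constants defined by A_i A_j = Σ_{h=0}^d p^h_{ij} A_h. Then for all 0 ≤ h, i, j ≤ d one has k_h p^h_{ij} = k_i p^i_{hj} = k_j p^j_{hi}. -/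
noncomputable section

open Finset

variable {F V : Type*} [Field F] [AddCommGroup V] [Module F V]

namespace SCAux

open Matrix

variable {F : Type*} [Field F]

lemma tri_kernel {n : ℕ} {M : Matrix (Fin (n+1)) (Fin (n+1)) F}
    (hM : IsIrredTridiag M) (y : Fin (n+1) → F) (θ : F)
    (hy : ∀ j, ∑ r, M r j * y r = θ * y j) (h0 : y 0 = 0) : ∀ j, y j = 0 := by
  have key : ∀ m : ℕ, ∀ j : Fin (n+1), (j : ℕ) ≤ m → y j = 0 := by
    intro m
    induction m with
    | zero =>
      intro j hj
      have : j = 0 := Fin.ext (by simp only [Fin.val_zero]; omega)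
      rwa [this]
    | succ m ih =>
      intro j hj
      rcases Nat.lt_or_ge (j : ℕ) (m+1) with h | h
      · exact ih j (by omega)
      have hjv : (j : ℕ) = m + 1 := le_antisymm hj h
      have hmlt : m < n + 1 := by have := j.isLt; omega
      set c : Fin (n+1) := ⟨m, hmlt⟩ with hc
      have hyc : y c = 0 := ih c (le_refl m)
      have hsum := hy c
      rw [hyc, mul_zero] at hsum
      have hsingle : ∑ r, M r c * y r = M j c * y j := by
        apply Finset.sum_eq_single j
        · intro r _ hrj
          rcases Nat.lt_trichotomy (r : ℕ) (m+1) with hr | hr | hr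
          · rw [ih r (by omega), mul_zero]
          · exact absurd (Fin.ext (by omega) : r = j) hrj
          · rw [hM.1 r c (Or.inr (show (c : ℕ) + 1 < (r : ℕ) by simp [hc]; omega)), zero_mul]
        · intro hj'; exact absurd (Finset.mem_univ j) hj'
      rw [hsingle] at hsum
      have hMne : M j c ≠ 0 := hM.2 j c (Or.inr (show (c : ℕ) + 1 = (j : ℕ) by simp [hc]; omega))
      exact (mul_eq_zero.mp hsum).resolve_left hMne
  intro j; exact key n j (by have := j.isLt; omega)

lemma symrel_mul {m : Type*} [Fintype m] [DecidableEq m] (Dv : m → F) (N N' : Matrix m m F)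
    (hN : ∀ r s, Dv r * N r s = Dv s * N s r) (hN' : ∀ r s, Dv r * N' r s = Dv s * N' s r)
    (hcomm : N * N' = N' * N) :
    ∀ r s, Dv r * (N * N') r s = Dv s * (N * N') s r := by
  intro r s
  have h2 : (N * N') s r = (N' * N) s r := by rw [hcomm]
  rw [h2]
  simp only [Matrix.mul_apply, Finset.mul_sum]
  apply Finset.sum_congr rfl
  intro t _
  calc Dv r * (N r t * N' t s) = (Dv r * N r t) * N' t s := by ring
    _ = (Dv t * N t r) * N' t s := by rw [hN]
    _ = N t r * (Dv t * N' t s) := by ring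
    _ = N t r * (Dv s * N' s t) := by rw [hN' t s]
    _ = Dv s * (N' s t * N t r) := by ring

lemma trace_rev4 {m : Type*} [Fintype m] [DecidableEq m] (Dv : m → F) (hD : ∀ i, Dv i ≠ 0)
    (W X Y Z : Matrix m m F)
    (hW : ∀ r s, Dv r * W r s = Dv s * W s r) (hX : ∀ r s, Dv r * X r s = Dv s * X s r)
    (hY : ∀ r s, Dv r * Y r s = Dv s * Y s r) (hZ : ∀ r s, Dv r * Z r s = Dv s * Z s r) :
    (W * X * Y * Z).trace = (Z * Y * X * W).trace := by
  set Di : Matrix m m F := Matrix.diagonal (fun i => (Dv i)⁻¹) with hDi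
  set Dm : Matrix m m F := Matrix.diagonal Dv with hDm
  have h1 : Di * Dm = 1 := by
    have hfun : (fun i => (Dv i)⁻¹ * Dv i) = fun _ => (1:F) := funext fun i => inv_mul_cancel₀ (hD i)
    rw [hDi, hDm, Matrix.diagonal_mul_diagonal, hfun, Matrix.diagonal_one]
  have hDiT : Diᵀ = Di := by rw [hDi, Matrix.diagonal_transpose]
  set SW := Dm * W with hSWdef
  set SX := Dm * X with hSXdef
  set SY := Dm * Y with hSYdef
  set SZ := Dm * Z with hSZdef
  have hfW : W = Di * SW := by rw [hSWdef, ← Matrix.mul_assoc, h1, Matrix.one_mul]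
  have hfX : X = Di * SX := by rw [hSXdef, ← Matrix.mul_assoc, h1, Matrix.one_mul]
  have hfY : Y = Di * SY := by rw [hSYdef, ← Matrix.mul_assoc, h1, Matrix.one_mul]
  have hfZ : Z = Di * SZ := by rw [hSZdef, ← Matrix.mul_assoc, h1, Matrix.one_mul]
  have hsymm : ∀ (N : Matrix m m F), (∀ r s, Dv r * N r s = Dv s * N s r) → (Dm * N)ᵀ = Dm * N := by
    intro N hN
    ext r s
    rw [Matrix.transpose_apply, hDm, Matrix.diagonal_mul, Matrix.diagonal_mul, hN]
  have hsW : SWᵀ = SW := by rw [hSWdef]; exact hsymm W hW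
  have hsX : SXᵀ = SX := by rw [hSXdef]; exact hsymm X hX
  have hsY : SYᵀ = SY := by rw [hSYdef]; exact hsymm Y hY
  have hsZ : SZᵀ = SZ := by rw [hSZdef]; exact hsymm Z hZ
  have e1 : W * X * Y * Z = Di * (SW * (Di * (SX * (Di * (SY * (Di * SZ)))))) := by
    rw [hfW, hfX, hfY, hfZ]; simp only [Matrix.mul_assoc]
  have e2 : Z * Y * X * W = Di * (SZ * (Di * (SY * (Di * (SX * (Di * SW)))))) := by
    rw [hfZ, hfY, hfX, hfW]; simp only [Matrix.mul_assoc]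
  rw [e1, e2, Matrix.trace_mul_comm Di (SW * (Di * (SX * (Di * (SY * (Di * SZ))))))]
  rw [← Matrix.trace_transpose ((SW * (Di * (SX * (Di * (SY * (Di * SZ)))))) * Di)]
  congr 1
  simp only [Matrix.transpose_mul, hDiT, hsW, hsX, hsY, hsZ, Matrix.mul_assoc]


variable {V : Type*} [AddCommGroup V] [Module F V]

lemma smul_cancel {v : V} (hv : v ≠ 0) {a b : F} (h : a • v = b • v) : a = b := by
  by_contra hne
  have h2 : (a - b) • v = 0 := by rw [sub_smul, h, sub_self]
  rcases smul_eq_zero.mp h2 with h' | h'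
  · exact hne (sub_eq_zero.mp h')
  · exact hv h'

lemma proj_eq {n : ℕ} (E : Fin n → Module.End F V)
    (hmul : ∀ i j, E i * E j = if i = j then E i else 0)
    (b : Module.Basis (Fin n) F V) (hb : ∀ i, E i (b i) = b i) (i : Fin n) (z : V) :
    E i z = b.repr z i • b i := by
  have hbasis : ∀ j, E i (b j) = if i = j then b i else 0 := by
    intro j
    by_cases h : i = j
    · subst h; simp [hb i]
    · have h2 : (E i * E j) (b j) = (0 : Module.End F V) (b j) := by rw [hmul i j, if_neg h]
      rw [Module.End.mul_apply, hb j] at h2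
      rw [h2, if_neg h, LinearMap.zero_apply]
  conv_lhs => rw [← b.sum_repr z]
  rw [map_sum]
  have : ∀ j ∈ Finset.univ, E i (b.repr z j • b j) =
      if i = j then b.repr z j • b i else 0 := by
    intro j _
    rw [_root_.map_smul, hbasis j]
    by_cases h : i = j
    · rw [if_pos h, if_pos h]
    · rw [if_neg h, if_neg h, smul_zero]
  rw [Finset.sum_congr rfl this, Finset.sum_ite_eq, if_pos (Finset.mem_univ i)]

lemma trace_mul_proj [Module.Finite F V] [Module.Free F V] {n : ℕ} (E0 : Module.End F V)
    (b : Module.Basis (Fin n) F V) (i0 : Fin n)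
    (hproj : ∀ z, E0 z = b.repr z i0 • b i0) (X : Module.End F V) :
    LinearMap.trace F V (X * E0) = b.repr (X (b i0)) i0 := by
  rw [LinearMap.trace_eq_matrix_trace F b, Matrix.trace]
  have hterm : ∀ j, (LinearMap.toMatrix b b (X * E0)).diag j =
      if j = i0 then b.repr (X (b i0)) i0 else 0 := by
    intro j
    rw [Matrix.diag, LinearMap.toMatrix_apply, Module.End.mul_apply, hproj (b j)]
    by_cases h : j = i0
    · subst h; simp
    · simp [Module.Basis.repr_self_apply, h]
  rw [Finset.sum_congr rfl (fun j _ => hterm j), Finset.sum_ite_eq', if_pos (Finset.mem_univ i0)]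

lemma proj_sandwich {n : ℕ} (E0 : Module.End F V) (b : Module.Basis (Fin n) F V) (i0 : Fin n)
    (hproj : ∀ z, E0 z = b.repr z i0 • b i0) (X : Module.End F V) :
    E0 * X * E0 = (b.repr (X (b i0)) i0) • E0 := by
  apply LinearMap.ext; intro z
  calc (E0 * X * E0) z = E0 (X (E0 z)) := rfl
    _ = E0 (X (b.repr z i0 • b i0)) := by rw [hproj z]
    _ = b.repr z i0 • E0 (X (b i0)) := by rw [_root_.map_smul, _root_.map_smul]
    _ = b.repr z i0 • (b.repr (X (b i0)) i0 • b i0) := by rw [hproj]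
    _ = b.repr (X (b i0)) i0 • (b.repr z i0 • b i0) := by rw [smul_comm]
    _ = b.repr (X (b i0)) i0 • E0 z := by rw [← hproj]
    _ = ((b.repr (X (b i0)) i0) • E0) z := rfl

end SCAux

/-- the `Aᵢ` form a basis of `⟨A⟩`, and the structure constants
`pʰᵢⱼ` defined by `Aᵢ Aⱼ = Σₕ pʰᵢⱼ Aₕ` satisfy `kₕ pʰᵢⱼ = kᵢ pⁱₕⱼ = kⱼ pʲₕᵢ`. -/
theorem structure_constants_symmetry {F V : Type*} [Field F] [AddCommGroup V] [Module F V]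
    (d : ℕ) (A Astar : Module.End F V) (E Estar : Fin (d + 1) → Module.End F V)
    (hLS : IsLeonardSystem d A Astar E Estar)
    (ν : F) (hν0 : ν ≠ 0)
    (hν1 : ν • (E 0 * Estar 0 * E 0) = E 0)
    (hν2 : ν • (Estar 0 * E 0 * Estar 0) = Estar 0)
    (Ai : Fin (d + 1) → Module.End F V)
    (hAi : ∀ i, Ai i ∈ Algebra.adjoin F {A} ∧
      Ai i * Estar 0 = ν • (Estar i * E 0 * Estar 0))
    (k : Fin (d + 1) → F)
    (hk : ∀ i, k i = ν * LinearMap.trace F V (Estar i * E 0)) :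
    (LinearIndependent F Ai ∧
      Submodule.span F (Set.range Ai) =
        Subalgebra.toSubmodule (Algebra.adjoin F {A})) ∧
    ∀ p : Fin (d + 1) → Fin (d + 1) → Fin (d + 1) → F,
      (∀ i j, Ai i * Ai j = ∑ h, p h i j • Ai h) →
      ∀ h i j, k h * p h i j = k i * p i h j ∧ k i * p i h j = k j * p j h i := by
  classical
  obtain ⟨hLP, hSO, hSOs⟩ := hLS
  obtain ⟨⟨hEne, hEmul, hEsum, θ, hθinj, hAsum⟩, b, hEb, hTstar, hDiagA⟩ := hSO
  obtain ⟨⟨hFne, hFmul, hFsum, φ, hφinj, hBsum⟩, c, hFc, hTri, hDiagB⟩ := hSOs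
  have hFD : FiniteDimensional F V := Module.Finite.of_basis b
  have hEproj : ∀ i z, E i z = b.repr z i • b i := fun i z => SCAux.proj_eq E hEmul b hEb i z
  have hFproj : ∀ i z, Estar i z = c.repr z i • c i := fun i z => SCAux.proj_eq Estar hFmul c hFc i z
  have hFA : ∀ i, Estar i * Astar = φ i • Estar i := by
    intro i
    rw [hBsum, Finset.mul_sum]
    have hterm : ∀ l ∈ Finset.univ, Estar i * (φ l • Estar l) = if i = l then φ l • Estar i else 0 := by
      intro l _
      rw [mul_smul_comm, hFmul i l]
      by_cases h : i = l
      · rw [if_pos h, if_pos h]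
      · rw [if_neg h, if_neg h, smul_zero]
    rw [Finset.sum_congr rfl hterm, Finset.sum_ite_eq, if_pos (Finset.mem_univ i)]
  have hcoord : ∀ i, c.repr (b 0) i ≠ 0 := by
    intro i hzero
    have hrec : ∀ j, ∑ r, (LinearMap.toMatrix b b Astar) r j * c.repr (b r) i
        = φ i * c.repr (b j) i := by
      intro j
      apply SCAux.smul_cancel (c.ne_zero i)
      have lhs1 : (∑ r, (LinearMap.toMatrix b b Astar) r j * c.repr (b r) i) • c i
          = Estar i (Astar (b j)) := by
        rw [Finset.sum_smul]
        have h1 : ∀ r ∈ Finset.univ, ((LinearMap.toMatrix b b Astar) r j * c.repr (b r) i) • c i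
            = Estar i ((LinearMap.toMatrix b b Astar) r j • b r) := by
          intro r _
          rw [_root_.map_smul, hFproj i (b r), mul_smul]
        rw [Finset.sum_congr rfl h1, ← map_sum]
        congr 1
        have h2 : ∀ r ∈ Finset.univ, (LinearMap.toMatrix b b Astar) r j • b r
            = b.repr (Astar (b j)) r • b r := by
          intro r _
          rw [LinearMap.toMatrix_apply]
        rw [Finset.sum_congr rfl h2]
        exact b.sum_repr (Astar (b j))
      have rhs1 : (φ i * c.repr (b j) i) • c i = Estar i (Astar (b j)) := by
        have h2 : Estar i (Astar (b j)) = (Estar i * Astar) (b j) := rfl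
        rw [h2, hFA i, LinearMap.smul_apply, hFproj i (b j), smul_smul]
      rw [lhs1, rhs1]
    have hall := SCAux.tri_kernel hTstar (fun j => c.repr (b j) i) (φ i) hrec hzero
    apply hFne i
    apply b.ext
    intro j
    rw [hFproj i (b j), show c.repr (b j) i = 0 from hall j, zero_smul, LinearMap.zero_apply]
  have hEc0 : E 0 (c 0) ≠ 0 := by
    intro hzero
    apply hEne 0
    apply LinearMap.ext; intro z
    rw [LinearMap.zero_apply, ← hν1, LinearMap.smul_apply, Module.End.mul_apply,
      Module.End.mul_apply, hFproj 0 (E 0 z), _root_.map_smul, hzero, smul_zero, smul_zero]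
  set μ : F := b.repr (c 0) 0 with hμdef
  have hEc0' : E 0 (c 0) = μ • b 0 := hEproj 0 (c 0)
  have hμ : μ ≠ 0 := by intro h; apply hEc0; rw [hEc0', h, zero_smul]
  have hli : LinearIndependent F Ai := by
    rw [Fintype.linearIndependent_iff]
    intro g hg
    have hg2 : (∑ i, g i • Ai i) * Estar 0 = 0 := by rw [hg, zero_mul]
    rw [Finset.sum_mul] at hg2
    have hg3 : ∑ i, (g i * ν) • (Estar i * E 0 * Estar 0) = 0 := by
      rw [← hg2]
      apply Finset.sum_congr rfl
      intro i _
      rw [smul_mul_assoc, (hAi i).2, smul_smul]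
    have hterm : ∀ i, (Estar i * E 0 * Estar 0) (c 0) = (μ * c.repr (b 0) i) • c i := by
      intro i
      rw [Module.End.mul_apply, Module.End.mul_apply, hFc 0, hEc0', _root_.map_smul,
        hFproj i (b 0), smul_smul]
    have hg5 : ∑ i, (g i * ν * (μ * c.repr (b 0) i)) • c i = 0 := by
      calc ∑ i, (g i * ν * (μ * c.repr (b 0) i)) • c i
          = ∑ i, (g i * ν) • ((Estar i * E 0 * Estar 0) (c 0)) := by
            apply Finset.sum_congr rfl; intro i _
            rw [hterm i, smul_smul]
        _ = (∑ i, (g i * ν) • (Estar i * E 0 * Estar 0)) (c 0) := by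
            rw [LinearMap.sum_apply]
            apply Finset.sum_congr rfl; intro i _
            rw [LinearMap.smul_apply]
        _ = 0 := by rw [hg3, LinearMap.zero_apply]
    intro i
    have h6 := Fintype.linearIndependent_iff.mp c.linearIndependent _ hg5 i
    rcases mul_eq_zero.mp h6 with h7 | h7
    · rcases mul_eq_zero.mp h7 with h8 | h8
      · exact h8
      · exact absurd h8 hν0
    · rcases mul_eq_zero.mp h7 with h8 | h8
      · exact absurd h8 hμ
      · exact absurd h8 (hcoord i)
  have hAcomm : ∀ x y, x ∈ Algebra.adjoin F {A} → y ∈ Algebra.adjoin F {A} → x * y = y * x := by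
    intro x y hx hy
    rw [Algebra.adjoin_singleton_eq_range_aeval] at hx hy
    rw [AlgHom.mem_range] at hx hy
    obtain ⟨px, hpx⟩ := hx
    obtain ⟨py, hpy⟩ := hy
    rw [← hpx, ← hpy, ← _root_.map_mul, ← _root_.map_mul, mul_comm]
  have hApow : ∀ n : ℕ, A ^ n = ∑ l, (θ l ^ n) • E l := by
    intro n
    induction n with
    | zero =>
      simp only [pow_zero, one_smul]
      exact hEsum.symm
    | succ n ih =>
      rw [pow_succ, ih, hAsum, Finset.sum_mul_sum]
      have hterm : ∀ l m', (θ l ^ n • E l) * (θ m' • E m')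
          = if l = m' then (θ l ^ (n+1)) • E l else 0 := by
        intro l m'
        rw [smul_mul_assoc, mul_smul_comm, smul_smul, hEmul l m']
        by_cases h : l = m'
        · rw [if_pos h, if_pos h, ← h, ← pow_succ]
        · rw [if_neg h, if_neg h, smul_zero]
      rw [Finset.sum_congr rfl (fun l _ => Finset.sum_congr rfl (fun m' _ => hterm l m'))]
      apply Finset.sum_congr rfl
      intro l _
      rw [Finset.sum_ite_eq, if_pos (Finset.mem_univ l)]
  have hpolyeval : ∀ q : Polynomial F, (Polynomial.aeval A) q
      = ∑ l, (Polynomial.eval (θ l) q) • E l := by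
    intro q
    induction q using Polynomial.induction_on' with
    | add p1 q1 hp1 hq1 =>
      rw [map_add, hp1, hq1, ← Finset.sum_add_distrib]
      apply Finset.sum_congr rfl; intro l _
      rw [Polynomial.eval_add, add_smul]
    | monomial n a =>
      rw [Polynomial.aeval_monomial, hApow n, Finset.mul_sum]
      apply Finset.sum_congr rfl; intro l _
      rw [Polynomial.eval_monomial, ← Algebra.smul_def, smul_smul]
  have hE0mem : E 0 ∈ Algebra.adjoin F {A} := by
    have heq : E 0 = (Polynomial.aeval A) (Lagrange.basis Finset.univ θ 0) := by
      rw [hpolyeval, Finset.sum_eq_single 0]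
      · rw [Lagrange.eval_basis_self (Function.Injective.injOn hθinj) (Finset.mem_univ 0), one_smul]
      · intro l _ hl
        rw [Lagrange.eval_basis_of_ne (Ne.symm hl) (Finset.mem_univ l), zero_smul]
      · intro h; exact absurd (Finset.mem_univ 0) h
    rw [heq, Algebra.adjoin_singleton_eq_range_aeval, AlgHom.mem_range]
    exact ⟨_, rfl⟩
  have hspan : Submodule.span F (Set.range Ai) = Subalgebra.toSubmodule (Algebra.adjoin F {A}) := by
    have hle : Submodule.span F (Set.range Ai) ≤ Subalgebra.toSubmodule (Algebra.adjoin F {A}) := by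
      rw [Submodule.span_le]
      rintro x ⟨i, rfl⟩
      exact (hAi i).1
    have hle2 : (Subalgebra.toSubmodule (Algebra.adjoin F {A}))
        ≤ Submodule.span F (Set.range E) := by
      intro x hx
      have hx' : x ∈ Algebra.adjoin F {A} := hx
      rw [Algebra.adjoin_singleton_eq_range_aeval, AlgHom.mem_range] at hx'
      obtain ⟨q, hq⟩ := hx'
      rw [← hq, hpolyeval]
      exact Submodule.sum_mem _ fun l _ => Submodule.smul_mem _ _ (Submodule.subset_span ⟨l, rfl⟩)
    apply (Submodule.eq_of_le_of_finrank_le hle ?_)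
    have h1 : Module.finrank F (Submodule.span F (Set.range Ai)) = d + 1 := by
      rw [finrank_span_eq_card hli, Fintype.card_fin]
    have h2 : Module.finrank F (Submodule.span F (Set.range E)) ≤ d + 1 := by
      have h3 := finrank_range_le_card (R := F) E
      rw [Fintype.card_fin] at h3
      exact h3
    calc Module.finrank F (Subalgebra.toSubmodule (Algebra.adjoin F {A}))
        ≤ Module.finrank F (Submodule.span F (Set.range E)) := Submodule.finrank_mono hle2
      _ ≤ d + 1 := h2
      _ = Module.finrank F (Submodule.span F (Set.range Ai)) := h1.symm
  refine ⟨⟨hli, hspan⟩, ?_⟩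
  -- auxiliary operator facts
  have hstar : ∀ s, Ai s * Estar 0 * E 0 = Estar s * E 0 := by
    intro s
    calc Ai s * Estar 0 * E 0 = (ν • (Estar s * E 0 * Estar 0)) * E 0 := by rw [(hAi s).2]
      _ = Estar s * (ν • (E 0 * Estar 0 * E 0)) := by
          simp only [smul_mul_assoc, mul_smul_comm, mul_assoc]
      _ = Estar s * E 0 := by rw [hν1]
  have hsand : ∀ X : Module.End F V, E 0 * X * E 0 = (LinearMap.trace F V (X * E 0)) • E 0 := by
    intro X
    rw [SCAux.proj_sandwich (E 0) b 0 (hEproj 0) X, SCAux.trace_mul_proj (E 0) b 0 (hEproj 0) X]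
  have htrE0 : LinearMap.trace F V (E 0) = 1 := by
    have h1 := SCAux.trace_mul_proj (E 0) b 0 (hEproj 0) 1
    rw [one_mul] at h1
    rw [h1, Module.End.one_apply, Module.Basis.repr_self_apply, if_pos rfl]
  have htr0 : LinearMap.trace F V (E 0 * Estar 0) = ν⁻¹ := by
    have h1 := congrArg (LinearMap.trace F V) hν1
    rw [_root_.map_smul, smul_eq_mul] at h1
    have h2 : LinearMap.trace F V (E 0 * Estar 0 * E 0) = LinearMap.trace F V (E 0 * Estar 0) := by
      rw [LinearMap.trace_mul_comm F (E 0 * Estar 0) (E 0), ← mul_assoc]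
      have h3 : E 0 * E 0 = E 0 := by rw [hEmul 0 0, if_pos rfl]
      rw [h3]
    rw [h2, htrE0] at h1
    exact eq_inv_of_mul_eq_one_right h1
  have htrk : ∀ h, LinearMap.trace F V (Estar h * E 0) = k h * ν⁻¹ := by
    intro h
    rw [hk h, mul_comm ν, mul_assoc, mul_inv_cancel₀ hν0, mul_one]
  -- the D matrix for the antiautomorphism argument
  set M : Matrix (Fin (d+1)) (Fin (d+1)) F := LinearMap.toMatrix c c A with hMdef
  set ratio : ℕ → F := fun t => if ht : t + 1 < d + 1
      then M ⟨t, Nat.lt_of_succ_lt ht⟩ ⟨t+1, ht⟩ * (M ⟨t+1, ht⟩ ⟨t, Nat.lt_of_succ_lt ht⟩)⁻¹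
      else 1 with hratiodef
  set Dv : Fin (d+1) → F := fun r => ∏ t ∈ Finset.range r.val, ratio t with hDvdef
  have hratio_ne : ∀ t, ratio t ≠ 0 := by
    intro t
    simp only [hratiodef]
    by_cases ht : t + 1 < d + 1
    · rw [dif_pos ht]
      exact mul_ne_zero (hTri.2 _ _ (Or.inl rfl)) (inv_ne_zero (hTri.2 _ _ (Or.inr rfl)))
    · rw [dif_neg ht]; exact one_ne_zero
  have hDv_ne : ∀ r, Dv r ≠ 0 := by
    intro r
    rw [hDvdef]
    exact Finset.prod_ne_zero_iff.mpr fun t _ => hratio_ne t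
  have hadj : ∀ r s : Fin (d+1), (r : ℕ) + 1 = (s : ℕ) → Dv r * M r s = Dv s * M s r := by
    intro r s hrs
    have hrlt : (r : ℕ) + 1 < d + 1 := by have := s.isLt; omega
    have hs : Dv s = Dv r * ratio r.val := by
      rw [hDvdef]
      show ∏ t ∈ Finset.range s.val, ratio t = (∏ t ∈ Finset.range r.val, ratio t) * ratio r.val
      rw [show (s : ℕ) = (r : ℕ) + 1 from hrs.symm, Finset.prod_range_succ]
    have e1 : (⟨(r : ℕ), Nat.lt_of_succ_lt hrlt⟩ : Fin (d+1)) = r := Fin.ext rfl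
    have e2 : (⟨(r : ℕ) + 1, hrlt⟩ : Fin (d+1)) = s := Fin.ext hrs
    have hratio_eq : ratio r.val = M r s * (M s r)⁻¹ := by
      rw [hratiodef]
      show (if ht : (r:ℕ) + 1 < d + 1 then _ else _) = _
      rw [dif_pos hrlt, e1, e2]
    have hMsr : M s r ≠ 0 := hTri.2 s r (Or.inr hrs)
    rw [hs, hratio_eq]
    field_simp
  have hDM : ∀ r s, Dv r * M r s = Dv s * M s r := by
    intro r s
    rcases Nat.lt_trichotomy (r : ℕ) (s : ℕ) with hlt | heq | hgt
    · by_cases hadj' : (r : ℕ) + 1 = (s : ℕ)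
      · exact hadj r s hadj'
      · have hfar : (r : ℕ) + 1 < (s : ℕ) := by omega
        rw [hTri.1 r s (Or.inl hfar), hTri.1 s r (Or.inr hfar), mul_zero, mul_zero]
    · have : r = s := Fin.ext heq
      subst this; rfl
    · by_cases hadj' : (s : ℕ) + 1 = (r : ℕ)
      · exact (hadj s r hadj').symm
      · have hfar : (s : ℕ) + 1 < (r : ℕ) := by omega
        rw [hTri.1 r s (Or.inr hfar), hTri.1 s r (Or.inl hfar), mul_zero, mul_zero]
  have hsym_adjoin : ∀ x, x ∈ Algebra.adjoin F {A} → ∀ r s,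
      Dv r * (LinearMap.toMatrix c c x) r s = Dv s * (LinearMap.toMatrix c c x) s r := by
    intro x hx
    induction hx using Algebra.adjoin_induction with
    | mem y hy =>
      rw [Set.mem_singleton_iff] at hy
      subst hy
      intro r s
      exact hDM r s
    | algebraMap r0 =>
      intro r s
      rw [Algebra.algebraMap_eq_smul_one, _root_.map_smul, LinearMap.toMatrix_one]
      by_cases h : r = s
      · subst h; rfl
      · rw [Matrix.smul_apply, Matrix.smul_apply, Matrix.one_apply_ne h,
          Matrix.one_apply_ne (Ne.symm h), smul_zero, mul_zero, mul_zero]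
    | add y z hy hz ihy ihz =>
      intro r s
      rw [map_add, Matrix.add_apply, Matrix.add_apply, mul_add, mul_add, ihy r s, ihz r s]
    | mul y z hy hz ihy ihz =>
      have hyz : (LinearMap.toMatrix c c y) * (LinearMap.toMatrix c c z)
          = (LinearMap.toMatrix c c z) * (LinearMap.toMatrix c c y) := by
        rw [← LinearMap.toMatrix_mul, ← LinearMap.toMatrix_mul, hAcomm y z hy hz]
      intro r s
      rw [LinearMap.toMatrix_mul]
      exact SCAux.symrel_mul Dv _ _ ihy ihz hyz r s
  have hFdiag : ∀ (l : Fin (d+1)) r s, r ≠ s → (LinearMap.toMatrix c c (Estar l)) r s = 0 := by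
    intro l r s hne
    rw [LinearMap.toMatrix_apply, hFproj l (c s), _root_.map_smul, Finsupp.smul_apply,
      Module.Basis.repr_self_apply, Module.Basis.repr_self_apply]
    by_cases h1 : s = l
    · subst h1
      rw [if_neg (show ¬ s = r from fun hh => hne hh.symm), smul_zero]
    · rw [if_neg h1, zero_smul]
  have hsymF : ∀ (l : Fin (d+1)) r s,
      Dv r * (LinearMap.toMatrix c c (Estar l)) r s = Dv s * (LinearMap.toMatrix c c (Estar l)) s r := by
    intro l r s
    by_cases h : r = s
    · subst h; rfl
    · rw [hFdiag l r s h, hFdiag l s r (Ne.symm h), mul_zero, mul_zero]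
  have hsig : ∀ h i j, LinearMap.trace F V (Estar j * E 0 * Estar h * Ai i)
      = LinearMap.trace F V (Estar h * E 0 * Estar j * Ai i) := by
    intro h i j
    rw [LinearMap.trace_eq_matrix_trace F c, LinearMap.trace_eq_matrix_trace F c]
    rw [LinearMap.toMatrix_mul, LinearMap.toMatrix_mul, LinearMap.toMatrix_mul,
      LinearMap.toMatrix_mul, LinearMap.toMatrix_mul, LinearMap.toMatrix_mul]
    rw [SCAux.trace_rev4 Dv hDv_ne _ _ _ _ (hsymF j) (hsym_adjoin (E 0) hE0mem)
      (hsymF h) (hsym_adjoin (Ai i) (hAi i).1)]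
    have hassoc : (LinearMap.toMatrix c c (Ai i)) * (LinearMap.toMatrix c c (Estar h))
        * (LinearMap.toMatrix c c (E 0)) * (LinearMap.toMatrix c c (Estar j))
        = (LinearMap.toMatrix c c (Ai i)) * ((LinearMap.toMatrix c c (Estar h))
        * (LinearMap.toMatrix c c (E 0)) * (LinearMap.toMatrix c c (Estar j))) := by
      simp only [Matrix.mul_assoc]
    rw [hassoc, Matrix.trace_mul_comm]
  -- now the structure constants
  intro p hp
  have hpsym : ∀ h i j, p h i j = p h j i := by
    intro h i j
    have hcomm2 : Ai i * Ai j = Ai j * Ai i := hAcomm _ _ (hAi i).1 (hAi j).1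
    have hsum : ∑ s, (p s i j - p s j i) • Ai s = 0 := by
      rw [Finset.sum_congr rfl (fun s _ => sub_smul (p s i j) (p s j i) (Ai s)),
        Finset.sum_sub_distrib, ← hp i j, ← hp j i, hcomm2, sub_self]
    have := Fintype.linearIndependent_iff.mp hli _ hsum h
    exact sub_eq_zero.mp this
  have hkey : ∀ h i j, k h * p h i j
      = ν * LinearMap.trace F V (Estar j * E 0 * Estar h * Ai i) := by
    intro h i j
    have hEA : ∀ s, E 0 * Estar h * Ai s * Estar 0
        = if h = s then ν • (E 0 * Estar h * E 0 * Estar 0) else 0 := by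
      intro s
      have h1 : E 0 * Estar h * Ai s * Estar 0 = E 0 * Estar h * (Ai s * Estar 0) := by
        rw [mul_assoc]
      rw [h1, (hAi s).2, mul_smul_comm]
      have h2 : E 0 * Estar h * (Estar s * E 0 * Estar 0)
          = E 0 * ((Estar h * Estar s) * (E 0 * Estar 0)) := by
        simp only [mul_assoc]
      rw [h2, hFmul h s]
      by_cases hhs : h = s
      · rw [if_pos hhs, if_pos hhs]
        simp only [mul_assoc]
      · rw [if_neg hhs, if_neg hhs, zero_mul, mul_zero, smul_zero]
    have hsum1 : E 0 * Estar h * (Ai i * Ai j) * Estar 0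
        = ∑ s, p s i j • (E 0 * Estar h * Ai s * Estar 0) := by
      rw [hp i j, Finset.mul_sum, Finset.sum_mul]
      apply Finset.sum_congr rfl
      intro s _
      rw [mul_smul_comm, smul_mul_assoc]
    have hmain : LinearMap.trace F V (E 0 * Estar h * (Ai i * Ai j) * Estar 0)
        = p h i j * (k h * ν⁻¹) := by
      rw [hsum1, map_sum]
      have hterm2 : ∀ s ∈ Finset.univ,
          LinearMap.trace F V (p s i j • (E 0 * Estar h * Ai s * Estar 0))
          = if h = s then p s i j * (k h * ν⁻¹) else 0 := by
        intro s _
        rw [_root_.map_smul, smul_eq_mul, hEA s]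
        by_cases hhs : h = s
        · rw [if_pos hhs, if_pos hhs, _root_.map_smul, smul_eq_mul]
          rw [hsand (Estar h), smul_mul_assoc, _root_.map_smul, smul_eq_mul, htrk h, htr0]
          field_simp
        · rw [if_neg hhs, if_neg hhs, map_zero, mul_zero]
      rw [Finset.sum_congr rfl hterm2, Finset.sum_ite_eq, if_pos (Finset.mem_univ h)]
    have hre : LinearMap.trace F V (E 0 * Estar h * (Ai i * Ai j) * Estar 0)
        = LinearMap.trace F V (Estar j * E 0 * Estar h * Ai i) := by
      have h4 : E 0 * Estar h * (Ai i * Ai j) * Estar 0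
          = (E 0 * Estar h * Ai i) * (Ai j * Estar 0) := by
        simp only [mul_assoc]
      rw [h4, LinearMap.trace_mul_comm F]
      have h5 : Ai j * Estar 0 * (E 0 * Estar h * Ai i)
          = Ai j * Estar 0 * E 0 * Estar h * Ai i := by simp only [mul_assoc]
      rw [h5, hstar j]
    rw [← hre, hmain]
    field_simp
  have hsw12 : ∀ a b' c', ν * LinearMap.trace F V (Estar b' * E 0 * Estar c' * Ai a)
      = ν * LinearMap.trace F V (Estar a * E 0 * Estar c' * Ai b') := by
    intro a b' c'
    rw [← hkey c' a b', ← hkey c' b' a, hpsym c' a b']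
  have hsw23 : ∀ a b' c', ν * LinearMap.trace F V (Estar b' * E 0 * Estar c' * Ai a)
      = ν * LinearMap.trace F V (Estar c' * E 0 * Estar b' * Ai a) := by
    intro a b' c'
    rw [hsig c' a b']
  intro h i j
  constructor
  · rw [hkey h i j, hkey i h j]
    calc ν * LinearMap.trace F V (Estar j * E 0 * Estar h * Ai i)
        = ν * LinearMap.trace F V (Estar h * E 0 * Estar j * Ai i) := hsw23 i j h
      _ = ν * LinearMap.trace F V (Estar i * E 0 * Estar j * Ai h) := hsw12 i h j
      _ = ν * LinearMap.trace F V (Estar j * E 0 * Estar i * Ai h) := hsw23 h i j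
  · rw [hkey i h j, hkey j h i]
    exact (hsw23 h i j).symm
end
end

section
/- Let Φ = (A; {E_i}_{i=0}^d; A*; {E*_i}_{i=0}^d) be a Leonard system on V, with ν, ρ, ρ*, A_i = ν ρ*(E*_i), and A*_i = ν ρ(E_i) as in the context. For 0 ≤ i, j ≤ d let μ_{ij} ∈ F and μ*_{ij} ∈ F be the scalars determined by A_i E_j = μ_{ij} E_j and A*_i E*_j = μ*_{ij} E*_j (these exist since A_i ∈ ⟨A⟩ and A*_i ∈ ⟨A*⟩). Then μ_{ij} μ*_{j0} = μ*_{ji} μ_{i0} for all 0 ≤ i, j ≤ d. (In the paper's notation this reads v_i(θ_j)/k_i = v*_j(θ*_i)/k*_j, since μ_{i0} = k_i and μ*_{j0} = k*_j are nonzero.) -/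
/-!
Transposition with respect to a basis in which `A` is irreducible tridiagonal and `A*` is
diagonal, followed by conjugation with a diagonal matrix that symmetrizes `A`, is an
antiautomorphism `†` of `End V` fixing `A` and `A*`, hence fixing every `Eᵢ` and `E*ᵢ`.
Since `Eⱼ` commutes with `Aᵢ ∈ ⟨A⟩`, the relation `Aᵢ E*₀ = ν E*ᵢ E₀ E*₀` gives
`Eⱼ E*ᵢ E₀ = μᵢⱼ Eⱼ E*₀ E₀`, and dually `E*ᵢ Eⱼ E*₀ = μ*ⱼᵢ E*ᵢ E₀ E*₀`. Hence
`E₀ E*₀ Eⱼ E*ᵢ E₀` and its image `E₀ E*ᵢ Eⱼ E*₀ E₀` under `†` are the multiples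
`μᵢⱼ μ*ⱼ₀` and `μ*ⱼᵢ μᵢ₀` of the `†`-fixed element `Z = E₀ E*₀ E₀ E*₀ E₀`, and `Z ≠ 0` because
`ν² Z = E₀`.
-/


noncomputable section

open Finset

variable {F V : Type*} [Field F] [AddCommGroup V] [Module F V]

open Matrix in
theorem IsIrredTridiag.exists_diagonal_symmetrizer {n : ℕ} {M : Matrix (Fin n) (Fin n) F}
    (hM : IsIrredTridiag M) :
    ∃ k : Fin n → F, (∀ p, k p ≠ 0) ∧ ∀ p q, k p * M q p = M p q * k q := by
  let g : ℕ → F := fun m =>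
    if h : m + 1 < n then M ⟨m + 1, h⟩ ⟨m, by omega⟩ / M ⟨m, by omega⟩ ⟨m + 1, h⟩ else 1
  let k : Fin n → F := fun p => ∏ m ∈ range p, g m
  have hg : ∀ m, g m ≠ 0 := fun m => by
    by_cases h : m + 1 < n
    · simpa [g, h] using ⟨hM.2 _ _ (Or.inr rfl), hM.2 _ _ (Or.inl rfl)⟩
    · simp [g, h]
  have hstep : ∀ p q : Fin n, (q : ℕ) = p + 1 → k p * M q p = M p q * k q := by
    rintro p ⟨q, hq⟩ rfl
    have hsuper : M p ⟨p + 1, hq⟩ ≠ 0 := hM.2 _ _ (Or.inl rfl)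
    simp only [k, prod_range_succ, g, dif_pos hq]
    field_simp
  refine ⟨k, fun p => prod_ne_zero_iff.mpr fun m _ => hg m, fun p q => ?_⟩
  wlog hpq : (p : ℕ) ≤ q generalizing p q
  · linear_combination -(this q p (by omega))
  obtain hpq | rfl | hpq := (show (q : ℕ) = p + 1 ∨ p = q ∨ (p : ℕ) + 1 < q by omega)
  · exact hstep p q hpq
  · ring
  · rw [hM.1 p q (Or.inl hpq), hM.1 q p (Or.inr hpq), mul_zero, zero_mul]

open Matrix in
theorem IsIrredTridiag.exists_antiautomorphism_fixing {n : ℕ} {M N : Matrix (Fin n) (Fin n) F}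
    (hM : IsIrredTridiag M) (hN : N.IsDiag) :
    ∃ τ : Matrix (Fin n) (Fin n) F ≃ₐ[F] (Matrix (Fin n) (Fin n) F)ᵐᵒᵖ,
      (τ M).unop = M ∧ (τ N).unop = N := by
  obtain ⟨k, hk0, hk⟩ := hM.exists_diagonal_symmetrizer
  obtain ⟨D, hD⟩ : IsUnit (diagonal k) :=
    isUnit_diagonal.mpr (Pi.isUnit_iff.mpr fun p => (hk0 p).isUnit)
  let τ := (transposeAlgEquiv (Fin n) F F).trans
    (AlgEquiv.op (MulSemiringAction.toAlgEquiv F _ (ConjAct.toConjAct D)))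
  have hτ : ∀ P, (τ P).unop = D * Pᵀ * D⁻¹.val := fun P => rfl
  have hfix : ∀ P, diagonal k * Pᵀ = P * diagonal k → (τ P).unop = P := fun P hP => by
    rw [← hD] at hP
    rw [hτ, hP, mul_assoc, Units.mul_inv, mul_one]
  refine ⟨τ, hfix M ?_, hfix N ?_⟩
  · ext p q
    simpa [mul_comm] using hk p q
  · rw [← hN.diagonal_diag, diagonal_transpose, diagonal_mul_diagonal, diagonal_mul_diagonal]
    simp only [mul_comm]

theorem IsLeonardPair.exists_antiautomorphism_fixing {d : ℕ} {A Astar : Module.End F V}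
    (h : IsLeonardPair d A Astar) :
    ∃ σ : Module.End F V ≃ₐ[F] (Module.End F V)ᵐᵒᵖ, (σ A).unop = A ∧ (σ Astar).unop = Astar := by
  obtain ⟨⟨b, hA, hAs⟩, -⟩ := h
  obtain ⟨τ, hτA, hτAs⟩ := hA.exists_antiautomorphism_fixing hAs
  let φ := LinearMap.toMatrixAlgEquiv b
  have hfix : ∀ X, (τ (φ X)).unop = φ X →
      ((φ.trans (τ.trans (AlgEquiv.op φ.symm))) X).unop = X := fun X hX =>
    (congrArg φ.symm hX).trans (φ.symm_apply_apply X)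
  exact ⟨_, hfix A hτA, hfix Astar hτAs⟩

section Idempotents

variable {R ι : Type*} [Ring R] [Algebra F R] [Fintype ι] {E : ι → R}

namespace OrthogonalIdempotents

theorem sum_smul_mul (he : OrthogonalIdempotents E) (θ : ι → F) (j : ι) :
    (∑ i, θ i • E i) * E j = θ j • E j := by
  rw [sum_mul, sum_eq_single j (fun i _ hij => by rw [smul_mul_assoc, he.ortho hij, smul_zero])
    (by simp), smul_mul_assoc, (he.idem j).eq]

theorem mul_sum_smul (he : OrthogonalIdempotents E) (θ : ι → F) (j : ι) :
    E j * (∑ i, θ i • E i) = θ j • E j := by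
  rw [mul_sum, sum_eq_single j (fun i _ hij => by rw [mul_smul_comm, he.ortho hij.symm, smul_zero])
    (by simp), mul_smul_comm, (he.idem j).eq]

theorem commute_of_mem_adjoin (he : OrthogonalIdempotents E) (θ : ι → F) {X : R}
    (hX : X ∈ Algebra.adjoin F {∑ i, θ i • E i}) (j : ι) : Commute (E j) X :=
  Algebra.commute_of_mem_adjoin_singleton_of_commute hX <|
    (he.mul_sum_smul θ j).trans (he.sum_smul_mul θ j).symm

end OrthogonalIdempotents

namespace CompleteOrthogonalIdempotents

theorem mul_eq_self_of_sum_smul_mul_eq (he : CompleteOrthogonalIdempotents E) {θ : ι → F}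
    (hθ : Function.Injective θ) {X : R} {m : ι} (hX : (∑ i, θ i • E i) * X = θ m • X) :
    E m * X = X := by
  have hzero : ∀ i ≠ m, E i * X = 0 := by
    intro i hi
    have h : (θ i - θ m) • (E i * X) = 0 := by
      rw [sub_smul, ← smul_mul_assoc, ← he.mul_sum_smul θ i, mul_assoc, hX, mul_smul_comm,
        sub_self]
    exact (smul_eq_zero.mp h).resolve_left (sub_ne_zero.mpr (hθ.ne hi))
  calc E m * X = ∑ i, E i * X := (sum_eq_single m (fun i _ hi => hzero i hi) (by simp)).symm
    _ = X := by rw [← sum_mul, he.complete, one_mul]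

theorem unop_map_eq_self (he : CompleteOrthogonalIdempotents E) {θ : ι → F}
    (hθ : Function.Injective θ) (σ : R →ₐ[F] Rᵐᵒᵖ)
    (hσ : (σ (∑ i, θ i • E i)).unop = ∑ i, θ i • E i) (j : ι) : (σ (E j)).unop = E j := by
  have hfix : ∀ m, E m * (σ (E m)).unop = (σ (E m)).unop := fun m => by
    have h := congrArg (fun Y => (σ Y).unop) (he.mul_sum_smul θ m)
    rw [map_mul, MulOpposite.unop_mul, hσ, map_smul, MulOpposite.unop_smul] at h
    exact he.mul_eq_self_of_sum_smul_mul_eq hθ h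
  calc (σ (E j)).unop = E j * (σ (E j)).unop := (hfix j).symm
    _ = ∑ m, E j * (σ (E m)).unop := by
      rw [sum_eq_single j (fun m _ hm => by rw [← hfix m, ← mul_assoc, he.ortho hm.symm, zero_mul])
        (by simp)]
    _ = E j * (σ (∑ m, E m)).unop := by rw [map_sum, unop_sum, mul_sum]
    _ = E j := by rw [he.complete, map_one, MulOpposite.unop_one, mul_one]

end CompleteOrthogonalIdempotents

end Idempotents

section Sandwich

variable {R : Type*} [Ring R] [Algebra F R]

theorem mul_mul_eq_smul_of_mul_eq_smul {X Y P P' Q : R} {ν c : F}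
    (hX : X * P = ν • (P' * Q * P)) (hν : ν • (Q * P * Q) = Q) (hY : Y * X = c • Y) :
    Y * P' * Q = c • (Y * P * Q) := by
  calc Y * P' * Q = ν • (Y * (P' * Q * P) * Q) := by
        conv_lhs => rw [← hν]
        simp only [mul_smul_comm, mul_assoc]
    _ = Y * (X * P) * Q := by rw [hX, mul_smul_comm, smul_mul_assoc]
    _ = c • (Y * P * Q) := by rw [← mul_assoc, hY, smul_mul_assoc, smul_mul_assoc]

theorem mul_mul_mul_mul_eq_smul {e f x y : R} {a b : F}
    (hxy : x * y * e = a • (x * f * e)) (hfx : f * x * f = b • (f * e * f)) :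
    e * f * x * y * e = (a * b) • (e * f * e * f * e) := by
  calc e * f * x * y * e = e * f * (x * y * e) := by noncomm_ring
    _ = a • (e * (f * x * f) * e) := by rw [hxy, mul_smul_comm]; noncomm_ring
    _ = (a * b) • (e * f * e * f * e) := by
        rw [hfx, mul_smul_comm, smul_mul_assoc, smul_smul]; noncomm_ring

theorem mul_mul_mul_mul_eq_smul' {e f x y : R} {a b : F}
    (hyx : y * x * f = b • (y * e * f)) (hey : e * y * e = a • (e * f * e)) :
    e * y * x * f * e = (b * a) • (e * f * e * f * e) := by
  calc e * y * x * f * e = e * (y * x * f) * e := by noncomm_ring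
    _ = b • (e * y * e * f * e) := by rw [hyx, mul_smul_comm, smul_mul_assoc]; noncomm_ring
    _ = (b * a) • (e * f * e * f * e) := by
        rw [hey, smul_mul_assoc, smul_mul_assoc, smul_smul]

end Sandwich

theorem askey_wilson_duality_general {F V : Type*} [Field F] [AddCommGroup V] [Module F V]
    (d : ℕ) (A Astar : Module.End F V) (E Estar : Fin (d + 1) → Module.End F V)
    (hLS : IsLeonardSystem d A Astar E Estar)
    (ν : F)
    (hν1 : ν • (E 0 * Estar 0 * E 0) = E 0)
    (hν2 : ν • (Estar 0 * E 0 * Estar 0) = Estar 0)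
    (Ai Asi : Fin (d + 1) → Module.End F V)
    (hAi : ∀ i, Ai i ∈ Algebra.adjoin F {A} ∧
      Ai i * Estar 0 = ν • (Estar i * E 0 * Estar 0))
    (hAsi : ∀ i, Asi i ∈ Algebra.adjoin F {Astar} ∧
      Asi i * E 0 = ν • (E i * Estar 0 * E 0))
    (μ μs : Fin (d + 1) → Fin (d + 1) → F)
    (hμ : ∀ i j, Ai i * E j = μ i j • E j)
    (hμs : ∀ i j, Asi i * Estar j = μs i j • Estar j) :
    ∀ i j, μ i j * μs j 0 = μs j i * μ i 0 := by
  intro i j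
  obtain ⟨σ, hσA, hσAs⟩ := hLS.1.exists_antiautomorphism_fixing
  obtain ⟨-, ⟨⟨hE0, hEE, hEsum, θ, hθ, rfl⟩, -⟩, ⟨⟨-, hEsEs, hEssum, θs, hθs, rfl⟩, -⟩⟩ := hLS
  have hE : CompleteOrthogonalIdempotents E := ⟨OrthogonalIdempotents.iff_mul_eq.mpr hEE, hEsum⟩
  have hEs : CompleteOrthogonalIdempotents Estar :=
    ⟨OrthogonalIdempotents.iff_mul_eq.mpr hEsEs, hEssum⟩
  have hσE : ∀ m, (σ (E m)).unop = E m := hE.unop_map_eq_self hθ σ.toAlgHom hσA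
  have hσEs : ∀ m, (σ (Estar m)).unop = Estar m := hEs.unop_map_eq_self hθs σ.toAlgHom hσAs
  have hI : ∀ i j, E j * Estar i * E 0 = μ i j • (E j * Estar 0 * E 0) := fun i j =>
    mul_mul_eq_smul_of_mul_eq_smul (hAi i).2 hν1 <| by
      rw [(hE.commute_of_mem_adjoin θ (hAi i).1 j).eq, hμ]
  have hII : ∀ i j, Estar i * E j * Estar 0 = μs j i • (Estar i * E 0 * Estar 0) := fun i j =>
    mul_mul_eq_smul_of_mul_eq_smul (hAsi j).2 hν2 <| by
      rw [(hEs.commute_of_mem_adjoin θs (hAsi j).1 i).eq, hμs]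
  set Z := E 0 * Estar 0 * E 0 * Estar 0 * E 0
  have hνZ : ν • Z = E 0 * Estar 0 * E 0 := by rw [← smul_mul_assoc, ← smul_mul_assoc, hν1]
  have hZ : Z ≠ 0 := fun h => hE0 0 <| by rw [← hν1, ← hνZ, h, smul_zero, smul_zero]
  have hσZ : (σ Z).unop = Z := by
    simp only [Z, map_mul, MulOpposite.unop_mul, hσE, hσEs, mul_assoc]
  apply smul_left_injective F hZ
  calc (μ i j * μs j 0) • Z = (σ ((μ i j * μs j 0) • Z)).unop := by
        rw [map_smul, MulOpposite.unop_smul, hσZ]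
    _ = (σ (E 0 * Estar 0 * E j * Estar i * E 0)).unop := by
        rw [mul_mul_mul_mul_eq_smul (hI i j) (hII 0 j)]
    _ = (μs j i * μ i 0) • Z := by
        rw [← mul_mul_mul_mul_eq_smul' (hII i j) (hI i 0)]
        simp only [map_mul, MulOpposite.unop_mul, hσE, hσEs, mul_assoc]

/-- the Askey–Wilson duality `vᵢ(θⱼ)/kᵢ = v*ⱼ(θ*ᵢ)/k*ⱼ`, stated as
`μᵢⱼ μ*ⱼ₀ = μ*ⱼᵢ μᵢ₀`, where `Aᵢ Eⱼ = μᵢⱼ Eⱼ` and `A*ᵢ E*ⱼ = μ*ᵢⱼ E*ⱼ`. -/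
theorem askey_wilson_duality {F V : Type*} [Field F] [AddCommGroup V] [Module F V]
    (d : ℕ) (A Astar : Module.End F V) (E Estar : Fin (d + 1) → Module.End F V)
    (hLS : IsLeonardSystem d A Astar E Estar)
    (ν : F) (hν0 : ν ≠ 0)
    (hν1 : ν • (E 0 * Estar 0 * E 0) = E 0)
    (hν2 : ν • (Estar 0 * E 0 * Estar 0) = Estar 0)
    (Ai Asi : Fin (d + 1) → Module.End F V)
    (hAi : ∀ i, Ai i ∈ Algebra.adjoin F {A} ∧
      Ai i * Estar 0 = ν • (Estar i * E 0 * Estar 0))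
    (hAsi : ∀ i, Asi i ∈ Algebra.adjoin F {Astar} ∧
      Asi i * E 0 = ν • (E i * Estar 0 * E 0))
    (μ μs : Fin (d + 1) → Fin (d + 1) → F)
    (hμ : ∀ i j, Ai i * E j = μ i j • E j)
    (hμs : ∀ i j, Asi i * Estar j = μs i j • Estar j) :
    ∀ i j, μ i j * μs j 0 = μs j i * μ i 0 :=
  askey_wilson_duality_general d A Astar E Estar hLS ν hν1 hν2 Ai Asi hAi hAsi μ μs hμ hμs
end
end
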